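/- arXiv:2212.07234 — 2 statements merged into one kernel-verified Lean document; each statement's English description precedes it below -/
import Mathlib

section
/- Consider a weighted 2-colored complete graph on the vertex set {1, …, 12} (each pair of distinct vertices has a weight in {1/2, 1} and a color, red or blue) which contains no blue triangle and no red generalized K₇, and whose density g(w) = max over the standard simplex of Σ_{1 ≤ i < j ≤ 12} w(i, j)·u_i·u_j satisfies g(w) ≥ 7/16. Then every vertex is incident to at least one edge of weight 1/2. -/
set_option maxHeartbeats 4000000

open Finset
open scoped Classical

namespace OneHalfK12

structure Ctx where
  w : Fin 12 → Fin 12 → ℝ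
  red : Fin 12 → Fin 12 → Prop
  hwsymm : ∀ i j, w i j = w j i
  hwval : ∀ i j : Fin 12, i ≠ j → w i j = 1 / 2 ∨ w i j = 1
  hredsymm : ∀ i j, red i j ↔ red j i
  hnoBlue : ∀ a b c : Fin 12, a ≠ b → a ≠ c → b ≠ c → red a b ∨ red a c ∨ red b c
  hnoGen : ¬ ∃ X Y : Finset (Fin 12), Y ⊆ X ∧ X.card + Y.card = 7 ∧
      (∀ i ∈ X, ∀ j ∈ X, i ≠ j → red i j) ∧ (∀ i ∈ Y, ∀ j ∈ Y, i ≠ j → w i j = 1)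
  v : Fin 12
  hvfull : ∀ j, j ≠ v → w v j = 1

namespace Ctx

variable (C : Ctx)

lemma rsym {i j : Fin 12} (h : C.red i j) : C.red j i := (C.hredsymm i j).mp h

lemma wsym' {i j : Fin 12} (h : C.w i j = 1) : C.w j i = 1 := (C.hwsymm j i).trans h

lemma notBlue {a b c : Fin 12} (hab : a ≠ b) (hac : a ≠ c) (hbc : b ≠ c)
    (h1 : ¬ C.red a b) (h2 : ¬ C.red a c) : C.red b c :=
  ((C.hnoBlue a b c hab hac hbc).resolve_left h1).resolve_left h2

lemma neRB {b q : Fin 12} (hb : ¬ C.red C.v b) (hq : C.red C.v q) : b ≠ q :=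
  fun h => hb (h ▸ hq)

end Ctx

lemma cardS2 {a b : Fin 12} (hab : a ≠ b) : ({a, b} : Finset (Fin 12)).card = 2 := by
  rw [Finset.card_insert_of_notMem (by simp [hab]), Finset.card_singleton]

lemma cardS3 {a b c : Fin 12} (hab : a ≠ b) (hac : a ≠ c) (hbc : b ≠ c) :
    ({a, b, c} : Finset (Fin 12)).card = 3 := by
  rw [show ({a,b,c} : Finset (Fin 12)) = insert a {b,c} from rfl,
    Finset.card_insert_of_notMem (by simp [hab, hac]), cardS2 hbc]

lemma cardS4 {a b c d : Fin 12} (hab : a ≠ b) (hac : a ≠ c) (had : a ≠ d)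
    (hbc : b ≠ c) (hbd : b ≠ d) (hcd : c ≠ d) :
    ({a, b, c, d} : Finset (Fin 12)).card = 4 := by
  rw [show ({a,b,c,d} : Finset (Fin 12)) = insert a {b,c,d} from rfl,
    Finset.card_insert_of_notMem (by simp [hab, hac, had]), cardS3 hbc hbd hcd]

lemma cardS5 {a b c d e : Fin 12} (hab : a ≠ b) (hac : a ≠ c) (had : a ≠ d) (hae : a ≠ e)
    (hbc : b ≠ c) (hbd : b ≠ d) (hbe : b ≠ e) (hcd : c ≠ d) (hce : c ≠ e) (hde : d ≠ e) :
    ({a, b, c, d, e} : Finset (Fin 12)).card = 5 := by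
  rw [show ({a,b,c,d,e} : Finset (Fin 12)) = insert a {b,c,d,e} from rfl,
    Finset.card_insert_of_notMem (by simp [hab, hac, had, hae]), cardS4 hbc hbd hbe hcd hce hde]

lemma cardS6 {a b c d e f : Fin 12} (hab : a ≠ b) (hac : a ≠ c) (had : a ≠ d) (hae : a ≠ e)
    (haf : a ≠ f) (hbc : b ≠ c) (hbd : b ≠ d) (hbe : b ≠ e) (hbf : b ≠ f)
    (hcd : c ≠ d) (hce : c ≠ e) (hcf : c ≠ f) (hde : d ≠ e) (hdf : d ≠ f) (hef : e ≠ f) :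
    ({a, b, c, d, e, f} : Finset (Fin 12)).card = 6 := by
  rw [show ({a,b,c,d,e,f} : Finset (Fin 12)) = insert a {b,c,d,e,f} from rfl,
    Finset.card_insert_of_notMem (by simp [hab, hac, had, hae, haf]),
    cardS5 hbc hbd hbe hbf hcd hce hcf hde hdf hef]

namespace Ctx

variable (C : Ctx)

/-- generalized K7 from a red 4-clique containing a fully-weighted triangle -/
lemma gk7_43 {a b c d : Fin 12} (hab : a ≠ b) (hac : a ≠ c) (had : a ≠ d)
    (hbc : b ≠ c) (hbd : b ≠ d) (hcd : c ≠ d)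
    (r1 : C.red a b) (r2 : C.red a c) (r3 : C.red a d)
    (r4 : C.red b c) (r5 : C.red b d) (r6 : C.red c d)
    (f1 : C.w a b = 1) (f2 : C.w a c = 1) (f3 : C.w b c = 1) : False := by
  apply C.hnoGen
  refine ⟨{a,b,c,d}, {a,b,c}, ?_, ?_, ?_, ?_⟩
  · intro x hx
    simp only [Finset.mem_insert, Finset.mem_singleton] at hx ⊢
    tauto
  · rw [cardS4 hab hac had hbc hbd hcd, cardS3 hab hac hbc]
  · intro i hi j hj hij
    simp only [Finset.mem_insert, Finset.mem_singleton] at hi hj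
    rcases hi with rfl|rfl|rfl|rfl <;> rcases hj with rfl|rfl|rfl|rfl <;>
      first | exact absurd rfl hij | assumption | exact C.rsym ‹_›
  · intro i hi j hj hij
    simp only [Finset.mem_insert, Finset.mem_singleton] at hi hj
    rcases hi with rfl|rfl|rfl <;> rcases hj with rfl|rfl|rfl <;>
      first | exact absurd rfl hij | assumption | exact C.wsym' ‹_›

/-- generalized K7 from a red 5-clique containing a fully-weighted edge -/
lemma gk7_52 {a b c d e : Fin 12} (hab : a ≠ b) (hac : a ≠ c) (had : a ≠ d) (hae : a ≠ e)
    (hbc : b ≠ c) (hbd : b ≠ d) (hbe : b ≠ e) (hcd : c ≠ d) (hce : c ≠ e) (hde : d ≠ e)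
    (r1 : C.red a b) (r2 : C.red a c) (r3 : C.red a d) (r4 : C.red a e)
    (r5 : C.red b c) (r6 : C.red b d) (r7 : C.red b e)
    (r8 : C.red c d) (r9 : C.red c e) (r10 : C.red d e)
    (f1 : C.w a b = 1) : False := by
  apply C.hnoGen
  refine ⟨{a,b,c,d,e}, {a,b}, ?_, ?_, ?_, ?_⟩
  · intro x hx
    simp only [Finset.mem_insert, Finset.mem_singleton] at hx ⊢
    tauto
  · rw [cardS5 hab hac had hae hbc hbd hbe hcd hce hde, cardS2 hab]
  · intro i hi j hj hij
    simp only [Finset.mem_insert, Finset.mem_singleton] at hi hj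
    rcases hi with rfl|rfl|rfl|rfl|rfl <;> rcases hj with rfl|rfl|rfl|rfl|rfl <;>
      first | exact absurd rfl hij | assumption | exact C.rsym ‹_›
  · intro i hi j hj hij
    simp only [Finset.mem_insert, Finset.mem_singleton] at hi hj
    rcases hi with rfl|rfl <;> rcases hj with rfl|rfl <;>
      first | exact absurd rfl hij | assumption | exact C.wsym' ‹_›

/-- generalized K7 from a red 6-clique -/
lemma gk7_61 {a b c d e f : Fin 12} (hab : a ≠ b) (hac : a ≠ c) (had : a ≠ d) (hae : a ≠ e)
    (haf : a ≠ f) (hbc : b ≠ c) (hbd : b ≠ d) (hbe : b ≠ e) (hbf : b ≠ f)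
    (hcd : c ≠ d) (hce : c ≠ e) (hcf : c ≠ f) (hde : d ≠ e) (hdf : d ≠ f) (hef : e ≠ f)
    (r1 : C.red a b) (r2 : C.red a c) (r3 : C.red a d) (r4 : C.red a e) (r5 : C.red a f)
    (r6 : C.red b c) (r7 : C.red b d) (r8 : C.red b e) (r9 : C.red b f)
    (r10 : C.red c d) (r11 : C.red c e) (r12 : C.red c f)
    (r13 : C.red d e) (r14 : C.red d f) (r15 : C.red e f) : False := by
  apply C.hnoGen
  refine ⟨{a,b,c,d,e,f}, {a}, ?_, ?_, ?_, ?_⟩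
  · intro x hx
    simp only [Finset.mem_insert, Finset.mem_singleton] at hx ⊢
    tauto
  · rw [cardS6 hab hac had hae haf hbc hbd hbe hbf hcd hce hcf hde hdf hef,
      Finset.card_singleton]
  · intro i hi j hj hij
    simp only [Finset.mem_insert, Finset.mem_singleton] at hi hj
    rcases hi with rfl|rfl|rfl|rfl|rfl|rfl <;> rcases hj with rfl|rfl|rfl|rfl|rfl|rfl <;>
      first | exact absurd rfl hij | assumption | exact C.rsym ‹_›
  · intro i hi j hj hij
    simp only [Finset.mem_singleton] at hi hj
    subst hi; subst hj; exact absurd rfl hij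

/-- a red triangle inside R (the red neighbourhood of v) whose edge bc is full : impossible -/
lemma T1 {a b c : Fin 12} (hav : a ≠ C.v) (hbv : b ≠ C.v) (hcv : c ≠ C.v)
    (ra : C.red C.v a) (rb : C.red C.v b) (rc : C.red C.v c)
    (hab : a ≠ b) (hac : a ≠ c) (hbc : b ≠ c)
    (fbc : C.w b c = 1) (r1 : C.red a b) (r2 : C.red a c) (r3 : C.red b c) : False :=
  C.gk7_43 (Ne.symm hbv) (Ne.symm hcv) (Ne.symm hav) hbc (Ne.symm hab) (Ne.symm hac)
    rb rc ra r3 (C.rsym r1) (C.rsym r2) (C.hvfull b hbv) (C.hvfull c hcv) fbc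

/-- a red K4 inside R : impossible -/
lemma T2 {a b c d : Fin 12} (hav : a ≠ C.v) (hbv : b ≠ C.v) (hcv : c ≠ C.v) (hdv : d ≠ C.v)
    (ra : C.red C.v a) (rb : C.red C.v b) (rc : C.red C.v c) (rd : C.red C.v d)
    (hab : a ≠ b) (hac : a ≠ c) (had : a ≠ d) (hbc : b ≠ c) (hbd : b ≠ d) (hcd : c ≠ d)
    (r1 : C.red a b) (r2 : C.red a c) (r3 : C.red a d)
    (r4 : C.red b c) (r5 : C.red b d) (r6 : C.red c d) : False :=
  C.gk7_52 (Ne.symm hav) (Ne.symm hbv) (Ne.symm hcv) (Ne.symm hdv) hab hac had hbc hbd hcd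
    ra rb rc rd r1 r2 r3 r4 r5 r6 (C.hvfull a hav)

end Ctx


lemma destruct2 {S : Finset (Fin 12)} (h : S.card = 2) :
    ∃ a b, a ∈ S ∧ b ∈ S ∧ a ≠ b := by
  rcases Finset.card_eq_two.mp h with ⟨a, b, hab, rfl⟩
  exact ⟨a, b, by simp, by simp, hab⟩

lemma destruct3 {S : Finset (Fin 12)} (h : S.card = 3) :
    ∃ a b c, a ∈ S ∧ b ∈ S ∧ c ∈ S ∧ a ≠ b ∧ a ≠ c ∧ b ≠ c := by
  rcases Finset.card_eq_three.mp h with ⟨a, b, c, hab, hac, hbc, rfl⟩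
  exact ⟨a, b, c, by simp, by simp, by simp, hab, hac, hbc⟩

lemma destruct4 {S : Finset (Fin 12)} (h : S.card = 4) :
    ∃ a b c d, a ∈ S ∧ b ∈ S ∧ c ∈ S ∧ d ∈ S ∧
      a ≠ b ∧ a ≠ c ∧ a ≠ d ∧ b ≠ c ∧ b ≠ d ∧ c ≠ d := by
  rcases Finset.card_eq_succ.mp h with ⟨a, t, hat, rfl, ht⟩
  rcases destruct3 ht with ⟨b, c, d, hb, hc, hd, hbc, hbd, hcd⟩
  exact ⟨a, b, c, d, Finset.mem_insert_self _ _, Finset.mem_insert_of_mem hb,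
    Finset.mem_insert_of_mem hc, Finset.mem_insert_of_mem hd,
    fun h' => hat (h' ▸ hb), fun h' => hat (h' ▸ hc), fun h' => hat (h' ▸ hd), hbc, hbd, hcd⟩

lemma destruct5 {S : Finset (Fin 12)} (h : S.card = 5) :
    ∃ a b c d e, a ∈ S ∧ b ∈ S ∧ c ∈ S ∧ d ∈ S ∧ e ∈ S ∧
      a ≠ b ∧ a ≠ c ∧ a ≠ d ∧ a ≠ e ∧ b ≠ c ∧ b ≠ d ∧ b ≠ e ∧ c ≠ d ∧ c ≠ e ∧ d ≠ e := by
  rcases Finset.card_eq_succ.mp h with ⟨a, t, hat, rfl, ht⟩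
  rcases destruct4 ht with ⟨b, c, d, e, hb, hc, hd, he, hbc, hbd, hbe, hcd, hce, hde⟩
  exact ⟨a, b, c, d, e, Finset.mem_insert_self _ _, Finset.mem_insert_of_mem hb,
    Finset.mem_insert_of_mem hc, Finset.mem_insert_of_mem hd, Finset.mem_insert_of_mem he,
    fun h' => hat (h' ▸ hb), fun h' => hat (h' ▸ hc), fun h' => hat (h' ▸ hd),
    fun h' => hat (h' ▸ he), hbc, hbd, hbe, hcd, hce, hde⟩

lemma destruct6 {S : Finset (Fin 12)} (h : S.card = 6) :
    ∃ a b c d e f, a ∈ S ∧ b ∈ S ∧ c ∈ S ∧ d ∈ S ∧ e ∈ S ∧ f ∈ S ∧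
      a ≠ b ∧ a ≠ c ∧ a ≠ d ∧ a ≠ e ∧ a ≠ f ∧ b ≠ c ∧ b ≠ d ∧ b ≠ e ∧ b ≠ f ∧
      c ≠ d ∧ c ≠ e ∧ c ≠ f ∧ d ≠ e ∧ d ≠ f ∧ e ≠ f := by
  rcases Finset.card_eq_succ.mp h with ⟨a, t, hat, rfl, ht⟩
  rcases destruct5 ht with ⟨b, c, d, e, f, hb, hc, hd, he, hf,
    hbc, hbd, hbe, hbf, hcd, hce, hcf, hde, hdf, hef⟩
  exact ⟨a, b, c, d, e, f, Finset.mem_insert_self _ _, Finset.mem_insert_of_mem hb,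
    Finset.mem_insert_of_mem hc, Finset.mem_insert_of_mem hd, Finset.mem_insert_of_mem he,
    Finset.mem_insert_of_mem hf,
    fun h' => hat (h' ▸ hb), fun h' => hat (h' ▸ hc), fun h' => hat (h' ▸ hd),
    fun h' => hat (h' ▸ he), fun h' => hat (h' ▸ hf),
    hbc, hbd, hbe, hbf, hcd, hce, hcf, hde, hdf, hef⟩

lemma pick3 {S : Finset (Fin 12)} (h : 3 ≤ S.card) :
    ∃ a b c, a ∈ S ∧ b ∈ S ∧ c ∈ S ∧ a ≠ b ∧ a ≠ c ∧ b ≠ c := by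
  obtain ⟨t, hts, ht⟩ := S.exists_subset_card_eq h
  rcases destruct3 ht with ⟨a, b, c, ha, hb, hc, h1, h2, h3⟩
  exact ⟨a, b, c, hts ha, hts hb, hts hc, h1, h2, h3⟩

lemma pick4 {S : Finset (Fin 12)} (h : 4 ≤ S.card) :
    ∃ a b c d, a ∈ S ∧ b ∈ S ∧ c ∈ S ∧ d ∈ S ∧
      a ≠ b ∧ a ≠ c ∧ a ≠ d ∧ b ≠ c ∧ b ≠ d ∧ c ≠ d := by
  obtain ⟨t, hts, ht⟩ := S.exists_subset_card_eq h
  rcases destruct4 ht with ⟨a, b, c, d, ha, hb, hc, hd, h1, h2, h3, h4, h5, h6⟩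
  exact ⟨a, b, c, d, hts ha, hts hb, hts hc, hts hd, h1, h2, h3, h4, h5, h6⟩

lemma pick5 {S : Finset (Fin 12)} (h : 5 ≤ S.card) :
    ∃ a b c d e, a ∈ S ∧ b ∈ S ∧ c ∈ S ∧ d ∈ S ∧ e ∈ S ∧
      a ≠ b ∧ a ≠ c ∧ a ≠ d ∧ a ≠ e ∧ b ≠ c ∧ b ≠ d ∧ b ≠ e ∧ c ≠ d ∧ c ≠ e ∧ d ≠ e := by
  obtain ⟨t, hts, ht⟩ := S.exists_subset_card_eq h
  rcases destruct5 ht with ⟨a, b, c, d, e, ha, hb, hc, hd, he, hs⟩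
  exact ⟨a, b, c, d, e, hts ha, hts hb, hts hc, hts hd, hts he, hs⟩

lemma pick6 {S : Finset (Fin 12)} (h : 6 ≤ S.card) :
    ∃ a b c d e f, a ∈ S ∧ b ∈ S ∧ c ∈ S ∧ d ∈ S ∧ e ∈ S ∧ f ∈ S ∧
      a ≠ b ∧ a ≠ c ∧ a ≠ d ∧ a ≠ e ∧ a ≠ f ∧ b ≠ c ∧ b ≠ d ∧ b ≠ e ∧ b ≠ f ∧
      c ≠ d ∧ c ≠ e ∧ c ≠ f ∧ d ≠ e ∧ d ≠ f ∧ e ≠ f := by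
  obtain ⟨t, hts, ht⟩ := S.exists_subset_card_eq h
  rcases destruct6 ht with ⟨a, b, c, d, e, f, ha, hb, hc, hd, he, hf, hs⟩
  exact ⟨a, b, c, d, e, f, hts ha, hts hb, hts hc, hts hd, hts he, hts hf, hs⟩


namespace Ctx
variable (C : Ctx)

noncomputable def Es : Finset (Fin 12) := Finset.univ.erase C.v

noncomputable def Rs : Finset (Fin 12) := C.Es.filter (fun j => C.red C.v j)

noncomputable def Bs : Finset (Fin 12) := C.Es \ C.Rs

lemma mem_Es {x : Fin 12} : x ∈ C.Es ↔ x ≠ C.v := by simp [Es]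

lemma mem_Rs {x : Fin 12} : x ∈ C.Rs ↔ x ≠ C.v ∧ C.red C.v x := by
  simp [Rs, mem_Es]

lemma mem_Bs {x : Fin 12} : x ∈ C.Bs ↔ x ≠ C.v ∧ ¬ C.red C.v x := by
  simp only [Bs, Finset.mem_sdiff, mem_Es, mem_Rs]
  tauto

lemma card_Es : C.Es.card = 11 := by
  simp [Es, Finset.card_erase_of_mem]

lemma card_RB : C.Rs.card + C.Bs.card = 11 := by
  have h1 : C.Rs ⊆ C.Es := Finset.filter_subset _ _
  have h3 : C.Bs.card = C.Es.card - C.Rs.card := Finset.card_sdiff_of_subset h1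
  have h4 : C.Rs.card ≤ C.Es.card := Finset.card_le_card h1
  have h2 := C.card_Es
  omega

/-- B is a red clique, so it has at most 5 elements. -/
lemma card_Bs_le : C.Bs.card ≤ 5 := by
  by_contra h
  push_neg at h
  obtain ⟨a, b, c, d, e, f, ha, hb, hc, hd, he, hf,
    hab, hac, had, hae, haf, hbc, hbd, hbe, hbf, hcd, hce, hcf, hde, hdf, hef⟩ := pick6 h
  rw [C.mem_Bs] at ha hb hc hd he hf
  have RR : ∀ x y : Fin 12, x ≠ C.v ∧ ¬ C.red C.v x → y ≠ C.v ∧ ¬ C.red C.v y → x ≠ y →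
      C.red x y := fun x y hx hy hxy =>
    C.notBlue (Ne.symm hx.1) (Ne.symm hy.1) hxy hx.2 hy.2
  exact C.gk7_61 hab hac had hae haf hbc hbd hbe hbf hcd hce hcf hde hdf hef
    (RR _ _ ha hb hab) (RR _ _ ha hc hac) (RR _ _ ha hd had) (RR _ _ ha he hae)
    (RR _ _ ha hf haf) (RR _ _ hb hc hbc) (RR _ _ hb hd hbd) (RR _ _ hb he hbe)
    (RR _ _ hb hf hbf) (RR _ _ hc hd hcd) (RR _ _ hc he hce) (RR _ _ hc hf hcf)
    (RR _ _ hd he hde) (RR _ _ hd hf hdf) (RR _ _ he hf hef)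

lemma card_Rs_ge : 6 ≤ C.Rs.card := by
  have := C.card_RB; have := C.card_Bs_le; omega

/-- No 5 pairwise fully-weighted vertices inside R. -/
lemma C5full {q1 q2 q3 q4 q5 : Fin 12}
    (h1 : q1 ∈ C.Rs) (h2 : q2 ∈ C.Rs) (h3 : q3 ∈ C.Rs) (h4 : q4 ∈ C.Rs) (h5 : q5 ∈ C.Rs)
    (d12 : q1 ≠ q2) (d13 : q1 ≠ q3) (d14 : q1 ≠ q4) (d15 : q1 ≠ q5)
    (d23 : q2 ≠ q3) (d24 : q2 ≠ q4) (d25 : q2 ≠ q5) (d34 : q3 ≠ q4) (d35 : q3 ≠ q5)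
    (d45 : q4 ≠ q5)
    (f12 : C.w q1 q2 = 1) (f13 : C.w q1 q3 = 1) (f14 : C.w q1 q4 = 1) (f15 : C.w q1 q5 = 1)
    (f23 : C.w q2 q3 = 1) (f24 : C.w q2 q4 = 1) (f25 : C.w q2 q5 = 1)
    (f34 : C.w q3 q4 = 1) (f35 : C.w q3 q5 = 1) (f45 : C.w q4 q5 = 1) : False := by
  -- find a vertex x of R outside {q1..q5}
  have hQ : ({q1,q2,q3,q4,q5} : Finset (Fin 12)).card = 5 :=
    cardS5 d12 d13 d14 d15 d23 d24 d25 d34 d35 d45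
  have hsd : 1 ≤ (C.Rs \ {q1,q2,q3,q4,q5}).card := by
    have := Finset.le_card_sdiff ({q1,q2,q3,q4,q5} : Finset (Fin 12)) C.Rs
    have := C.card_Rs_ge
    omega
  obtain ⟨x, hx⟩ := Finset.card_pos.mp (show 0 < (C.Rs \ {q1,q2,q3,q4,q5}).card by omega)
  rw [Finset.mem_sdiff] at hx
  obtain ⟨hxR, hxQ⟩ := hx
  simp only [Finset.mem_insert, Finset.mem_singleton] at hxQ
  push_neg at hxQ
  obtain ⟨hx1, hx2, hx3, hx4, hx5⟩ := hxQ
  rw [C.mem_Rs] at hxR h1 h2 h3 h4 h5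
  -- x cannot be red to three of the q's
  have sub1 : ∀ a b c : Fin 12, (a ≠ C.v ∧ C.red C.v a) → (b ≠ C.v ∧ C.red C.v b) →
      (c ≠ C.v ∧ C.red C.v c) → x ≠ a → x ≠ b → x ≠ c → a ≠ b → a ≠ c → b ≠ c →
      C.w a b = 1 → C.w a c = 1 → C.w b c = 1 →
      C.red x a → C.red x b → C.red x c → False := by
    intro a b c ha hb hc hxa hxb hxc hab hac hbc fab fac fbc xa xb xc
    rcases em (C.red a b) with h|h
    · exact C.T1 hxR.1 ha.1 hb.1 hxR.2 ha.2 hb.2 hxa hxb hab fab xa xb h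
    rcases em (C.red a c) with h'|h'
    · exact C.T1 hxR.1 ha.1 hc.1 hxR.2 ha.2 hc.2 hxa hxc hac fac xa xc h'
    rcases em (C.red b c) with h''|h''
    · exact C.T1 hxR.1 hb.1 hc.1 hxR.2 hb.2 hc.2 hxb hxc hbc fbc xb xc h''
    · rcases C.hnoBlue a b c hab hac hbc with hh|hh|hh <;> [exact h hh; exact h' hh; exact h'' hh]
  -- x cannot be non-red to three of the q's
  have sub2 : ∀ a b c : Fin 12, (a ≠ C.v ∧ C.red C.v a) → (b ≠ C.v ∧ C.red C.v b) →
      (c ≠ C.v ∧ C.red C.v c) → x ≠ a → x ≠ b → x ≠ c → a ≠ b → a ≠ c → b ≠ c →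
      C.w a b = 1 → C.w a c = 1 → C.w b c = 1 →
      ¬ C.red x a → ¬ C.red x b → ¬ C.red x c → False := by
    intro a b c ha hb hc hxa hxb hxc hab hac hbc fab fac fbc xa xb xc
    have rab : C.red a b := C.notBlue hxa hxb hab xa xb
    have rac : C.red a c := C.notBlue hxa hxc hac xa xc
    have rbc : C.red b c := C.notBlue hxb hxc hbc xb xc
    exact C.T1 ha.1 hb.1 hc.1 ha.2 hb.2 hc.2 hab hac hbc fbc rab rac rbc
  have r123 := sub1 q1 q2 q3 h1 h2 h3 hx1 hx2 hx3 d12 d13 d23 f12 f13 f23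
  have r124 := sub1 q1 q2 q4 h1 h2 h4 hx1 hx2 hx4 d12 d14 d24 f12 f14 f24
  have r125 := sub1 q1 q2 q5 h1 h2 h5 hx1 hx2 hx5 d12 d15 d25 f12 f15 f25
  have r134 := sub1 q1 q3 q4 h1 h3 h4 hx1 hx3 hx4 d13 d14 d34 f13 f14 f34
  have r135 := sub1 q1 q3 q5 h1 h3 h5 hx1 hx3 hx5 d13 d15 d35 f13 f15 f35
  have r145 := sub1 q1 q4 q5 h1 h4 h5 hx1 hx4 hx5 d14 d15 d45 f14 f15 f45
  have r234 := sub1 q2 q3 q4 h2 h3 h4 hx2 hx3 hx4 d23 d24 d34 f23 f24 f34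
  have r235 := sub1 q2 q3 q5 h2 h3 h5 hx2 hx3 hx5 d23 d25 d35 f23 f25 f35
  have r245 := sub1 q2 q4 q5 h2 h4 h5 hx2 hx4 hx5 d24 d25 d45 f24 f25 f45
  have r345 := sub1 q3 q4 q5 h3 h4 h5 hx3 hx4 hx5 d34 d35 d45 f34 f35 f45
  have b123 := sub2 q1 q2 q3 h1 h2 h3 hx1 hx2 hx3 d12 d13 d23 f12 f13 f23
  have b124 := sub2 q1 q2 q4 h1 h2 h4 hx1 hx2 hx4 d12 d14 d24 f12 f14 f24
  have b125 := sub2 q1 q2 q5 h1 h2 h5 hx1 hx2 hx5 d12 d15 d25 f12 f15 f25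
  have b134 := sub2 q1 q3 q4 h1 h3 h4 hx1 hx3 hx4 d13 d14 d34 f13 f14 f34
  have b135 := sub2 q1 q3 q5 h1 h3 h5 hx1 hx3 hx5 d13 d15 d35 f13 f15 f35
  have b145 := sub2 q1 q4 q5 h1 h4 h5 hx1 hx4 hx5 d14 d15 d45 f14 f15 f45
  have b234 := sub2 q2 q3 q4 h2 h3 h4 hx2 hx3 hx4 d23 d24 d34 f23 f24 f34
  have b235 := sub2 q2 q3 q5 h2 h3 h5 hx2 hx3 hx5 d23 d25 d35 f23 f25 f35
  have b245 := sub2 q2 q4 q5 h2 h4 h5 hx2 hx4 hx5 d24 d25 d45 f24 f25 f45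
  have b345 := sub2 q3 q4 q5 h3 h4 h5 hx3 hx4 hx5 d34 d35 d45 f34 f35 f45
  rcases em (C.red x q1) with h1'|h1' <;> rcases em (C.red x q2) with h2'|h2' <;>
    rcases em (C.red x q3) with h3'|h3' <;> rcases em (C.red x q4) with h4'|h4' <;>
    rcases em (C.red x q5) with h5'|h5' <;>
  first
  | exact r123 h1' h2' h3' | exact r124 h1' h2' h4' | exact r125 h1' h2' h5'
  | exact r134 h1' h3' h4' | exact r135 h1' h3' h5' | exact r145 h1' h4' h5'
  | exact r234 h2' h3' h4' | exact r235 h2' h3' h5' | exact r245 h2' h4' h5'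
  | exact r345 h3' h4' h5'
  | exact b123 h1' h2' h3' | exact b124 h1' h2' h4' | exact b125 h1' h2' h5'
  | exact b134 h1' h3' h4' | exact b135 h1' h3' h5' | exact b145 h1' h4' h5'
  | exact b234 h2' h3' h4' | exact b235 h2' h3' h5' | exact b245 h2' h4' h5'
  | exact b345 h3' h4' h5' 

end Ctx

namespace Ctx
variable (C : Ctx)

lemma bsym {i j : Fin 12} (h : ¬ C.red i j) : ¬ C.red j i :=
  fun h' => h ((C.hredsymm j i).mp h')

/-- red triangle inside R with full edge bc -/
lemma T1R {a b c : Fin 12} (ha : a ∈ C.Rs) (hb : b ∈ C.Rs) (hc : c ∈ C.Rs)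
    (hab : a ≠ b) (hac : a ≠ c) (hbc : b ≠ c) (fbc : C.w b c = 1)
    (r1 : C.red a b) (r2 : C.red a c) (r3 : C.red b c) : False := by
  rw [C.mem_Rs] at ha hb hc
  exact C.T1 ha.1 hb.1 hc.1 ha.2 hb.2 hc.2 hab hac hbc fbc r1 r2 r3

/-- red K4 inside R -/
lemma T2R {a b c d : Fin 12} (ha : a ∈ C.Rs) (hb : b ∈ C.Rs) (hc : c ∈ C.Rs) (hd : d ∈ C.Rs)
    (hab : a ≠ b) (hac : a ≠ c) (had : a ≠ d) (hbc : b ≠ c) (hbd : b ≠ d) (hcd : c ≠ d)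
    (r1 : C.red a b) (r2 : C.red a c) (r3 : C.red a d)
    (r4 : C.red b c) (r5 : C.red b d) (r6 : C.red c d) : False := by
  rw [C.mem_Rs] at ha hb hc hd
  exact C.T2 ha.1 hb.1 hc.1 hd.1 ha.2 hb.2 hc.2 hd.2 hab hac had hbc hbd hcd r1 r2 r3 r4 r5 r6

/-- x ∈ R cannot be red to all three of a fully-weighted triple in R -/
lemma triR {x a b c : Fin 12} (hx : x ∈ C.Rs) (ha : a ∈ C.Rs) (hb : b ∈ C.Rs) (hc : c ∈ C.Rs)
    (hxa : x ≠ a) (hxb : x ≠ b) (hxc : x ≠ c) (hab : a ≠ b) (hac : a ≠ c) (hbc : b ≠ c)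
    (fab : C.w a b = 1) (fac : C.w a c = 1) (fbc : C.w b c = 1)
    (xa : C.red x a) (xb : C.red x b) (xc : C.red x c) : False := by
  rcases em (C.red a b) with h|h
  · exact C.T1R hx ha hb hxa hxb hab fab xa xb h
  rcases em (C.red a c) with h'|h'
  · exact C.T1R hx ha hc hxa hxc hac fac xa xc h'
  rcases em (C.red b c) with h''|h''
  · exact C.T1R hx hb hc hxb hxc hbc fbc xb xc h''
  · rcases C.hnoBlue a b c hab hac hbc with hh|hh|hh <;> [exact h hh; exact h' hh; exact h'' hh]

/-- x cannot be non-red to all three of a fully-weighted triple in R -/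
lemma triB {x a b c : Fin 12} (ha : a ∈ C.Rs) (hb : b ∈ C.Rs) (hc : c ∈ C.Rs)
    (hxa : x ≠ a) (hxb : x ≠ b) (hxc : x ≠ c) (hab : a ≠ b) (hac : a ≠ c) (hbc : b ≠ c)
    (fbc : C.w b c = 1)
    (xa : ¬ C.red x a) (xb : ¬ C.red x b) (xc : ¬ C.red x c) : False := by
  have rab : C.red a b := C.notBlue hxa hxb hab xa xb
  have rac : C.red a c := C.notBlue hxa hxc hac xa xc
  have rbc : C.red b c := C.notBlue hxb hxc hbc xb xc
  exact C.T1R ha hb hc hab hac hbc fbc rab rac rbc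

end Ctx

namespace Ctx
variable (C : Ctx)

/-- Core of case (2,4): x' ∈ R outside a fully-weighted 4-set {a,b,c,d} ⊆ R,
with `red a b` and `¬ red c d`, cannot be red to a. -/
lemma noxa {a b c d x' : Fin 12}
    (ha : a ∈ C.Rs) (hb : b ∈ C.Rs) (hc : c ∈ C.Rs) (hd : d ∈ C.Rs) (hx : x' ∈ C.Rs)
    (hxa : x' ≠ a) (hxb : x' ≠ b) (hxc : x' ≠ c) (hxd : x' ≠ d)
    (hab : a ≠ b) (hac : a ≠ c) (had : a ≠ d) (hbc : b ≠ c) (hbd : b ≠ d) (hcd : c ≠ d)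
    (fab : C.w a b = 1) (fac : C.w a c = 1) (fad : C.w a d = 1)
    (fbc : C.w b c = 1) (fbd : C.w b d = 1) (fcd : C.w c d = 1)
    (rab : C.red a b) (ncd : ¬ C.red c d) (hra : C.red x' a) : False := by
  rcases em (C.red x' b) with hrb|hrb
  · exact C.T1R hx ha hb hxa hxb hab fab hra hrb rab
  rcases em (C.red x' c) with hrc|hrc
  · rcases em (C.red x' d) with hrd|hrd
    · exact C.triR hx ha hc hd hxa hxc hxd hac had hcd fac fad fcd hra hrc hrd
    · have nac : ¬ C.red a c := fun h => C.T1R hx ha hc hxa hxc hac fac hra hrc h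
      have rbd : C.red b d := C.notBlue hxb hxd hbd hrb hrd
      rcases em (C.red a d) with h|h
      · exact C.T1R ha hb hd hab had hbd fbd rab h rbd
      · rcases C.hnoBlue a c d hac had hcd with hh|hh|hh <;>
          [exact nac hh; exact h hh; exact ncd hh]
  · rcases em (C.red x' d) with hrd|hrd
    · have nad : ¬ C.red a d := fun h => C.T1R hx ha hd hxa hxd had fad hra hrd h
      have rbc : C.red b c := C.notBlue hxb hxc hbc hrb hrc
      rcases em (C.red a c) with h|h
      · exact C.T1R ha hb hc hab hac hbc fbc rab h rbc
      · rcases C.hnoBlue a c d hac had hcd with hh|hh|hh <;>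
          [exact h hh; exact nad hh; exact ncd hh]
    · rcases C.hnoBlue x' c d hxc hxd hcd with hh|hh|hh <;>
        [exact hrc hh; exact hrd hh; exact ncd hh]

/-- Complement of `noxa`: such an x' must be red to c. -/
lemma yesxc {a b c d x' : Fin 12}
    (ha : a ∈ C.Rs) (hb : b ∈ C.Rs) (hc : c ∈ C.Rs) (hd : d ∈ C.Rs) (hx : x' ∈ C.Rs)
    (hxa : x' ≠ a) (hxb : x' ≠ b) (hxc : x' ≠ c) (hxd : x' ≠ d)
    (hab : a ≠ b) (hac : a ≠ c) (had : a ≠ d) (hbc : b ≠ c) (hbd : b ≠ d) (hcd : c ≠ d)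
    (fbc : C.w b c = 1)
    (rab : C.red a b) (ncd : ¬ C.red c d)
    (na : ¬ C.red x' a) (nb : ¬ C.red x' b) : C.red x' c := by
  by_contra hxcn
  rcases em (C.red x' d) with hrd|hrd
  · have rac : C.red a c := C.notBlue hxa hxc hac na hxcn
    have rbc : C.red b c := C.notBlue hxb hxc hbc nb hxcn
    exact C.T1R ha hb hc hab hac hbc fbc rab rac rbc
  · rcases C.hnoBlue x' c d hxc hxd hcd with hh|hh|hh <;>
      [exact hxcn hh; exact hrd hh; exact ncd hh]

/-- Case (2,4) finish: all three outside vertices share the same pattern, giving a red K4 in R. -/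
lemma finish24 {a b c d x1 x2 x3 : Fin 12}
    (ha : a ∈ C.Rs) (hb : b ∈ C.Rs) (hc : c ∈ C.Rs) (hd : d ∈ C.Rs)
    (h1 : x1 ∈ C.Rs) (h2 : x2 ∈ C.Rs) (h3 : x3 ∈ C.Rs)
    (h1a : x1 ≠ a) (h1b : x1 ≠ b) (h1c : x1 ≠ c) (h1d : x1 ≠ d)
    (h2a : x2 ≠ a) (h2b : x2 ≠ b) (h2c : x2 ≠ c) (h2d : x2 ≠ d)
    (h3a : x3 ≠ a) (h3b : x3 ≠ b) (h3c : x3 ≠ c) (h3d : x3 ≠ d)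
    (h12 : x1 ≠ x2) (h13 : x1 ≠ x3) (h23 : x2 ≠ x3)
    (hab : a ≠ b) (hac : a ≠ c) (had : a ≠ d) (hbc : b ≠ c) (hbd : b ≠ d) (hcd : c ≠ d)
    (fab : C.w a b = 1) (fac : C.w a c = 1) (fad : C.w a d = 1)
    (fbc : C.w b c = 1) (fbd : C.w b d = 1) (fcd : C.w c d = 1)
    (rab : C.red a b) (ncd : ¬ C.red c d) : False := by
  have rba : C.red b a := C.rsym rab
  have key : ∀ x : Fin 12, x ∈ C.Rs → x ≠ a → x ≠ b → x ≠ c → x ≠ d →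
      ¬ C.red x a ∧ C.red x c := by
    intro x hx hxa hxb hxc hxd
    have na : ¬ C.red x a := fun h =>
      C.noxa ha hb hc hd hx hxa hxb hxc hxd hab hac had hbc hbd hcd
        fab fac fad fbc fbd fcd rab ncd h
    have nb : ¬ C.red x b := fun h =>
      C.noxa hb ha hc hd hx hxb hxa hxc hxd (Ne.symm hab) hbc hbd hac had hcd
        (C.wsym' fab) fbc fbd fac fad fcd rba ncd h
    exact ⟨na, C.yesxc ha hb hc hd hx hxa hxb hxc hxd hab hac had hbc hbd hcd
      fbc rab ncd na nb⟩
  obtain ⟨n1, r1⟩ := key x1 h1 h1a h1b h1c h1d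
  obtain ⟨n2, r2⟩ := key x2 h2 h2a h2b h2c h2d
  obtain ⟨n3, r3⟩ := key x3 h3 h3a h3b h3c h3d
  have r12 : C.red x1 x2 := C.notBlue (Ne.symm h1a) (Ne.symm h2a) h12 (C.bsym n1) (C.bsym n2)
  have r13 : C.red x1 x3 := C.notBlue (Ne.symm h1a) (Ne.symm h3a) h13 (C.bsym n1) (C.bsym n3)
  have r23 : C.red x2 x3 := C.notBlue (Ne.symm h2a) (Ne.symm h3a) h23 (C.bsym n2) (C.bsym n3)
  exact C.T2R h1 h2 h3 hc h12 h13 h1c h23 h2c h3c r12 r13 r1 r23 r2 r3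

/-- No 4 pairwise fully-weighted vertices in R together with a fully-weighted pair in B. -/
lemma C24 {q1 q2 q3 q4 b1 b2 : Fin 12}
    (h1 : q1 ∈ C.Rs) (h2 : q2 ∈ C.Rs) (h3 : q3 ∈ C.Rs) (h4 : q4 ∈ C.Rs)
    (d12 : q1 ≠ q2) (d13 : q1 ≠ q3) (d14 : q1 ≠ q4) (d23 : q2 ≠ q3) (d24 : q2 ≠ q4)
    (d34 : q3 ≠ q4)
    (f12 : C.w q1 q2 = 1) (f13 : C.w q1 q3 = 1) (f14 : C.w q1 q4 = 1)
    (f23 : C.w q2 q3 = 1) (f24 : C.w q2 q4 = 1) (f34 : C.w q3 q4 = 1)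
    (hb1 : b1 ∈ C.Bs) (hb2 : b2 ∈ C.Bs) (hb12 : b1 ≠ b2) (fb : C.w b1 b2 = 1) : False := by
  -- B has at most 4 elements
  have hB4 : C.Bs.card ≤ 4 := by
    by_contra h
    push_neg at h
    have h3' : 3 ≤ (C.Bs \ {b1, b2}).card := by
      have := Finset.le_card_sdiff ({b1, b2} : Finset (Fin 12)) C.Bs
      have : ({b1, b2} : Finset (Fin 12)).card = 2 := cardS2 hb12
      omega
    obtain ⟨c1, c2, c3, hc1, hc2, hc3, e12, e13, e23⟩ := pick3 h3'
    rw [Finset.mem_sdiff] at hc1 hc2 hc3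
    have ne1 : c1 ≠ b1 ∧ c1 ≠ b2 := by
      constructor <;> intro h' <;> apply hc1.2 <;> simp [h']
    have ne2 : c2 ≠ b1 ∧ c2 ≠ b2 := by
      constructor <;> intro h' <;> apply hc2.2 <;> simp [h']
    have ne3 : c3 ≠ b1 ∧ c3 ≠ b2 := by
      constructor <;> intro h' <;> apply hc3.2 <;> simp [h']
    have RR : ∀ x y : Fin 12, x ∈ C.Bs → y ∈ C.Bs → x ≠ y → C.red x y := by
      intro x y hx hy hxy
      rw [C.mem_Bs] at hx hy
      exact C.notBlue (Ne.symm hx.1) (Ne.symm hy.1) hxy hx.2 hy.2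
    exact C.gk7_52 hb12 (Ne.symm ne1.1) (Ne.symm ne2.1) (Ne.symm ne3.1)
      (Ne.symm ne1.2) (Ne.symm ne2.2) (Ne.symm ne3.2) e12 e13 e23
      (RR _ _ hb1 hb2 hb12) (RR _ _ hb1 hc1.1 (Ne.symm ne1.1)) (RR _ _ hb1 hc2.1 (Ne.symm ne2.1))
      (RR _ _ hb1 hc3.1 (Ne.symm ne3.1)) (RR _ _ hb2 hc1.1 (Ne.symm ne1.2))
      (RR _ _ hb2 hc2.1 (Ne.symm ne2.2)) (RR _ _ hb2 hc3.1 (Ne.symm ne3.2))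
      (RR _ _ hc1.1 hc2.1 e12) (RR _ _ hc1.1 hc3.1 e13) (RR _ _ hc2.1 hc3.1 e23) fb
  -- hence R has at least 7 elements and we find x1 x2 x3 outside {q1..q4}
  have hR7 : 7 ≤ C.Rs.card := by have := C.card_RB; omega
  have hx3 : 3 ≤ (C.Rs \ {q1, q2, q3, q4}).card := by
    have := Finset.le_card_sdiff ({q1, q2, q3, q4} : Finset (Fin 12)) C.Rs
    have : ({q1, q2, q3, q4} : Finset (Fin 12)).card = 4 := cardS4 d12 d13 d14 d23 d24 d34
    omega
  obtain ⟨x1, x2, x3, hx1, hx2, hx3', e12, e13, e23⟩ := pick3 hx3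
  rw [Finset.mem_sdiff] at hx1 hx2 hx3'
  simp only [Finset.mem_insert, Finset.mem_singleton] at hx1 hx2 hx3'
  push_neg at hx1 hx2 hx3'
  obtain ⟨hx1R, hx1q⟩ := hx1
  obtain ⟨hx2R, hx2q⟩ := hx2
  obtain ⟨hx3R, hx3q⟩ := hx3'
  -- derive the pattern of x1 and dispatch
  have F : ∀ a b c d : Fin 12, a ∈ C.Rs → b ∈ C.Rs → c ∈ C.Rs → d ∈ C.Rs →
      (x1 ≠ a) → (x1 ≠ b) → (x1 ≠ c) → (x1 ≠ d) →
      (x2 ≠ a) → (x2 ≠ b) → (x2 ≠ c) → (x2 ≠ d) →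
      (x3 ≠ a) → (x3 ≠ b) → (x3 ≠ c) → (x3 ≠ d) →
      a ≠ b → a ≠ c → a ≠ d → b ≠ c → b ≠ d → c ≠ d →
      C.w a b = 1 → C.w a c = 1 → C.w a d = 1 → C.w b c = 1 → C.w b d = 1 → C.w c d = 1 →
      ¬ C.red x1 a → ¬ C.red x1 b → C.red x1 c → C.red x1 d → False := by
    intro a b c d ha hb hc hd g1a g1b g1c g1d g2a g2b g2c g2d g3a g3b g3c g3d
      gab gac gad gbc gbd gcd vab vac vad vbc vbd vcd na nb rc rd
    have rab : C.red a b := C.notBlue g1a g1b gab na nb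
    have ncd : ¬ C.red c d := fun h => C.T1R hx1R hc hd g1c g1d gcd vcd rc rd h
    exact C.finish24 ha hb hc hd hx1R hx2R hx3R g1a g1b g1c g1d g2a g2b g2c g2d g3a g3b g3c g3d
      e12 e13 e23 gab gac gad gbc gbd gcd vab vac vad vbc vbd vcd rab ncd
  have s12 := Ne.symm d12
  have s13 := Ne.symm d13
  have s14 := Ne.symm d14
  have s23 := Ne.symm d23
  have s24 := Ne.symm d24
  have s34 := Ne.symm d34
  have g12 := C.wsym' f12
  have g13 := C.wsym' f13
  have g14 := C.wsym' f14
  have g23 := C.wsym' f23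
  have g24 := C.wsym' f24
  have g34 := C.wsym' f34
  rcases em (C.red x1 q1) with e1|e1 <;> rcases em (C.red x1 q2) with e2|e2 <;>
    rcases em (C.red x1 q3) with e3|e3 <;> rcases em (C.red x1 q4) with e4|e4
  · exact C.triR hx1R h1 h2 h3 hx1q.1 hx1q.2.1 hx1q.2.2.1 d12 d13 d23 f12 f13 f23 e1 e2 e3
  · exact C.triR hx1R h1 h2 h3 hx1q.1 hx1q.2.1 hx1q.2.2.1 d12 d13 d23 f12 f13 f23 e1 e2 e3
  · exact C.triR hx1R h1 h2 h4 hx1q.1 hx1q.2.1 hx1q.2.2.2 d12 d14 d24 f12 f14 f24 e1 e2 e4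
  · -- reds {q1,q2} : (a,b,c,d) = (q3,q4,q1,q2)
    exact F q3 q4 q1 q2 h3 h4 h1 h2 hx1q.2.2.1 hx1q.2.2.2 hx1q.1 hx1q.2.1
      hx2q.2.2.1 hx2q.2.2.2 hx2q.1 hx2q.2.1 hx3q.2.2.1 hx3q.2.2.2 hx3q.1 hx3q.2.1
      d34 s13 s23 s14 s24 d12 f34 g13 g23 g14 g24 f12 e3 e4 e1 e2
  · exact C.triR hx1R h1 h3 h4 hx1q.1 hx1q.2.2.1 hx1q.2.2.2 d13 d14 d34 f13 f14 f34 e1 e3 e4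
  · -- reds {q1,q3} : (a,b,c,d) = (q2,q4,q1,q3)
    exact F q2 q4 q1 q3 h2 h4 h1 h3 hx1q.2.1 hx1q.2.2.2 hx1q.1 hx1q.2.2.1
      hx2q.2.1 hx2q.2.2.2 hx2q.1 hx2q.2.2.1 hx3q.2.1 hx3q.2.2.2 hx3q.1 hx3q.2.2.1
      d24 s12 d23 s14 s34 d13 f24 g12 f23 g14 g34 f13 e2 e4 e1 e3
  · -- reds {q1,q4} : (a,b,c,d) = (q2,q3,q1,q4)
    exact F q2 q3 q1 q4 h2 h3 h1 h4 hx1q.2.1 hx1q.2.2.1 hx1q.1 hx1q.2.2.2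
      hx2q.2.1 hx2q.2.2.1 hx2q.1 hx2q.2.2.2 hx3q.2.1 hx3q.2.2.1 hx3q.1 hx3q.2.2.2
      d23 s12 d24 s13 d34 d14 f23 g12 f24 g13 f34 f14 e2 e3 e1 e4
  · -- reds {q1} only : blues q2 q3 q4
    exact C.triB h2 h3 h4 hx1q.2.1 hx1q.2.2.1 hx1q.2.2.2 d23 d24 d34 f34 e2 e3 e4
  · exact C.triR hx1R h2 h3 h4 hx1q.2.1 hx1q.2.2.1 hx1q.2.2.2 d23 d24 d34 f23 f24 f34 e2 e3 e4
  · -- reds {q2,q3} : (a,b,c,d) = (q1,q4,q2,q3)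
    exact F q1 q4 q2 q3 h1 h4 h2 h3 hx1q.1 hx1q.2.2.2 hx1q.2.1 hx1q.2.2.1
      hx2q.1 hx2q.2.2.2 hx2q.2.1 hx2q.2.2.1 hx3q.1 hx3q.2.2.2 hx3q.2.1 hx3q.2.2.1
      d14 d12 d13 s24 s34 d23 f14 f12 f13 g24 g34 f23 e1 e4 e2 e3
  · -- reds {q2,q4} : (a,b,c,d) = (q1,q3,q2,q4)
    exact F q1 q3 q2 q4 h1 h3 h2 h4 hx1q.1 hx1q.2.2.1 hx1q.2.1 hx1q.2.2.2
      hx2q.1 hx2q.2.2.1 hx2q.2.1 hx2q.2.2.2 hx3q.1 hx3q.2.2.1 hx3q.2.1 hx3q.2.2.2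
      d13 d12 d14 s23 d34 d24 f13 f12 f14 g23 f34 f24 e1 e3 e2 e4
  · -- reds {q2} : blues q1 q3 q4
    exact C.triB h1 h3 h4 hx1q.1 hx1q.2.2.1 hx1q.2.2.2 d13 d14 d34 f34 e1 e3 e4
  · -- reds {q3,q4} : (a,b,c,d) = (q1,q2,q3,q4)
    exact F q1 q2 q3 q4 h1 h2 h3 h4 hx1q.1 hx1q.2.1 hx1q.2.2.1 hx1q.2.2.2
      hx2q.1 hx2q.2.1 hx2q.2.2.1 hx2q.2.2.2 hx3q.1 hx3q.2.1 hx3q.2.2.1 hx3q.2.2.2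
      d12 d13 d14 d23 d24 d34 f12 f13 f14 f23 f24 f34 e1 e2 e3 e4
  · -- reds {q3} : blues q1 q2 q4
    exact C.triB h1 h2 h4 hx1q.1 hx1q.2.1 hx1q.2.2.2 d12 d14 d24 f24 e1 e2 e4
  · -- reds {q4} : blues q1 q2 q3
    exact C.triB h1 h2 h3 hx1q.1 hx1q.2.1 hx1q.2.2.1 d12 d13 d23 f23 e1 e2 e3
  · -- all blue
    exact C.triB h1 h2 h3 hx1q.1 hx1q.2.1 hx1q.2.2.1 d12 d13 d23 f23 e1 e2 e3

end Ctx

namespace Ctx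
variable (C : Ctx)

/-- blue neighbourhood (within R) of a vertex -/
noncomputable def Dset (b : Fin 12) : Finset (Fin 12) :=
  C.Rs.filter (fun r => ¬ C.red b r)

lemma mem_Dset {b y : Fin 12} : y ∈ C.Dset b ↔ y ∈ C.Rs ∧ ¬ C.red b y :=
  Finset.mem_filter

lemma Dset_subset (b : Fin 12) : C.Dset b ⊆ C.Rs := Finset.filter_subset _ _

lemma red_of_notMem_Dset {b y : Fin 12} (hy : y ∈ C.Rs) (h : y ∉ C.Dset b) : C.red b y := by
  by_contra hr
  exact h (C.mem_Dset.mpr ⟨hy, hr⟩)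

/-- the blue neighbourhood in R of a vertex of B has at most 3 elements -/
lemma card_Dset_le {b : Fin 12} (hb : b ∈ C.Bs) : (C.Dset b).card ≤ 3 := by
  rw [C.mem_Bs] at hb
  by_contra h
  push_neg at h
  obtain ⟨r1, r2, r3, r4, m1, m2, m3, m4, e12, e13, e14, e23, e24, e34⟩ := pick4 h
  rw [C.mem_Dset] at m1 m2 m3 m4
  have hbne : ∀ y : Fin 12, y ∈ C.Rs → b ≠ y := fun y hy => C.neRB hb.2 (C.mem_Rs.mp hy).2
  have RR : ∀ y z : Fin 12, (y ∈ C.Rs ∧ ¬ C.red b y) → (z ∈ C.Rs ∧ ¬ C.red b z) → y ≠ z →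
      C.red y z := fun y z hy hz hyz =>
    C.notBlue (hbne y hy.1) (hbne z hz.1) hyz hy.2 hz.2
  exact C.T2R m1.1 m2.1 m3.1 m4.1 e12 e13 e14 e23 e24 e34
    (RR _ _ m1 m2 e12) (RR _ _ m1 m3 e13) (RR _ _ m1 m4 e14)
    (RR _ _ m2 m3 e23) (RR _ _ m2 m4 e24) (RR _ _ m3 m4 e34)

/-- "win" situation for case (3,3): two common exclusive blue-neighbours of β1 -/
lemma winC3 {β1 β2 β3 q x : Fin 12}
    (hβ1 : β1 ∈ C.Bs) (hβ2 : β2 ∈ C.Bs) (hβ3 : β3 ∈ C.Bs) (h23 : β2 ≠ β3)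
    (f23 : C.w β2 β3 = 1)
    (hq : q ∈ C.Rs) (hx : x ∈ C.Rs) (hqx : q ≠ x)
    (fq2 : C.w β2 q = 1) (fq3 : C.w β3 q = 1)
    (nbq : ¬ C.red β1 q) (nbx : ¬ C.red β1 x)
    (rq2 : C.red β2 q) (rq3 : C.red β3 q) (rx2 : C.red β2 x) (rx3 : C.red β3 x) : False := by
  rw [C.mem_Bs] at hβ1 hβ2 hβ3
  rw [C.mem_Rs] at hq hx
  have r23 : C.red β2 β3 := C.notBlue (Ne.symm hβ2.1) (Ne.symm hβ3.1) h23 hβ2.2 hβ3.2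
  have hβ1q : β1 ≠ q := C.neRB hβ1.2 hq.2
  have hβ1x : β1 ≠ x := C.neRB hβ1.2 hx.2
  have rqx : C.red q x := C.notBlue hβ1q hβ1x hqx nbq nbx
  exact C.gk7_43 h23 (C.neRB hβ2.2 hq.2) (C.neRB hβ2.2 hx.2) (C.neRB hβ3.2 hq.2)
    (C.neRB hβ3.2 hx.2) hqx r23 rq2 rx2 rq3 rx3 rqx f23 fq2 fq3

/-- case (3,3), exclusive vertices hosted by two distinct blue neighbourhoods -/
lemma neqC3 {β1 β2 β3 qa qb : Fin 12}
    (hβ1 : β1 ∈ C.Bs) (hβ2 : β2 ∈ C.Bs) (hβ3 : β3 ∈ C.Bs)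
    (d13 : β1 ≠ β3) (d23 : β2 ≠ β3)
    (f13 : C.w β1 β3 = 1) (f23 : C.w β2 β3 = 1)
    (hqa : qa ∈ C.Rs) (hqb : qb ∈ C.Rs)
    (fa2 : C.w β2 qa = 1) (fa3 : C.w β3 qa = 1)
    (fb1 : C.w β1 qb = 1) (fb3 : C.w β3 qb = 1)
    (na1 : ¬ C.red β1 qa) (ra2 : C.red β2 qa) (ra3 : C.red β3 qa)
    (nb2 : ¬ C.red β2 qb) (rb1 : C.red β1 qb) (rb3 : C.red β3 qb)
    (hD1 : 2 ≤ (C.Dset β1).card) (hD2 : 2 ≤ (C.Dset β2).card)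
    (hD3 : (C.Dset β3).card ≤ 3)
    (hcov : 8 ≤ (C.Dset β1).card + (C.Dset β2).card + (C.Dset β3).card)
    (hM : ∀ y z : Fin 12, y ∈ C.Rs → z ∈ C.Rs → y ≠ z →
      ((¬C.red β1 y ∧ ¬C.red β2 y) ∨ (¬C.red β1 y ∧ ¬C.red β3 y) ∨
        (¬C.red β2 y ∧ ¬C.red β3 y)) →
      ((¬C.red β1 z ∧ ¬C.red β2 z) ∨ (¬C.red β1 z ∧ ¬C.red β3 z) ∨
        (¬C.red β2 z ∧ ¬C.red β3 z)) → False) : False := by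
  obtain ⟨x, hxD1, hxqa⟩ := Finset.exists_mem_ne (s := C.Dset β1) (by omega) qa
  obtain ⟨x', hxD2, hxqb⟩ := Finset.exists_mem_ne (s := C.Dset β2) (by omega) qb
  rw [C.mem_Dset] at hxD1 hxD2
  obtain ⟨hxR, hx1⟩ := hxD1
  obtain ⟨hxR', hx2'⟩ := hxD2
  -- x must be a multi vertex (else win with qa)
  have hxM : (¬C.red β1 x ∧ ¬C.red β2 x) ∨ (¬C.red β1 x ∧ ¬C.red β3 x) ∨
      (¬C.red β2 x ∧ ¬C.red β3 x) := by
    rcases em (C.red β2 x) with h2|h2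
    · rcases em (C.red β3 x) with h3|h3
      · exact absurd (C.winC3 hβ1 hβ2 hβ3 d23 f23 hqa hxR (Ne.symm hxqa) fa2 fa3 na1 hx1
          ra2 ra3 h2 h3) not_false
      · exact Or.inr (Or.inl ⟨hx1, h3⟩)
    · exact Or.inl ⟨hx1, h2⟩
  have hxM' : (¬C.red β1 x' ∧ ¬C.red β2 x') ∨ (¬C.red β1 x' ∧ ¬C.red β3 x') ∨
      (¬C.red β2 x' ∧ ¬C.red β3 x') := by
    rcases em (C.red β1 x') with h1|h1
    · rcases em (C.red β3 x') with h3|h3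
      · exact absurd (C.winC3 hβ2 hβ1 hβ3 d13 f13 hqb hxR' (Ne.symm hxqb) fb1 fb3 nb2 hx2'
          rb1 rb3 h1 h3) not_false
      · exact Or.inr (Or.inr ⟨hx2', h3⟩)
    · exact Or.inl ⟨h1, hx2'⟩
  -- hence x = x'
  have hxx : x = x' := by
    by_contra hne
    exact hM x x' hxR hxR' hne hxM hxM'
  subst hxx
  -- both Dsets are contained in a pair
  have hsub1 : C.Dset β1 ⊆ {qa, x} := by
    intro y hy
    rw [C.mem_Dset] at hy
    by_contra hyn
    simp only [Finset.mem_insert, Finset.mem_singleton] at hyn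
    push_neg at hyn
    have hyM : (¬C.red β1 y ∧ ¬C.red β2 y) ∨ (¬C.red β1 y ∧ ¬C.red β3 y) ∨
        (¬C.red β2 y ∧ ¬C.red β3 y) := by
      rcases em (C.red β2 y) with h2|h2
      · rcases em (C.red β3 y) with h3|h3
        · exact absurd (C.winC3 hβ1 hβ2 hβ3 d23 f23 hqa hy.1 (Ne.symm hyn.1) fa2 fa3 na1 hy.2
            ra2 ra3 h2 h3) not_false
        · exact Or.inr (Or.inl ⟨hy.2, h3⟩)
      · exact Or.inl ⟨hy.2, h2⟩
    exact hM y x hy.1 hxR hyn.2 hyM hxM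
  have hsub2 : C.Dset β2 ⊆ {qb, x} := by
    intro y hy
    rw [C.mem_Dset] at hy
    by_contra hyn
    simp only [Finset.mem_insert, Finset.mem_singleton] at hyn
    push_neg at hyn
    have hyM : (¬C.red β1 y ∧ ¬C.red β2 y) ∨ (¬C.red β1 y ∧ ¬C.red β3 y) ∨
        (¬C.red β2 y ∧ ¬C.red β3 y) := by
      rcases em (C.red β1 y) with h1|h1
      · rcases em (C.red β3 y) with h3|h3
        · exact absurd (C.winC3 hβ2 hβ1 hβ3 d13 f13 hqb hy.1 (Ne.symm hyn.1) fb1 fb3 nb2 hy.2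
            rb1 rb3 h1 h3) not_false
        · exact Or.inr (Or.inr ⟨hy.2, h3⟩)
      · exact Or.inl ⟨h1, hy.2⟩
    exact hM y x hy.1 hxR hyn.2 hyM hxM
  have hc1 : (C.Dset β1).card ≤ 2 := by
    calc (C.Dset β1).card ≤ ({qa, x} : Finset (Fin 12)).card := Finset.card_le_card hsub1
    _ ≤ 2 := (Finset.card_insert_le _ _).trans (by simp)
  have hc2 : (C.Dset β2).card ≤ 2 := by
    calc (C.Dset β2).card ≤ ({qb, x} : Finset (Fin 12)).card := Finset.card_le_card hsub2
    _ ≤ 2 := (Finset.card_insert_le _ _).trans (by simp)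
  omega

end Ctx

namespace Ctx
variable (C : Ctx)

/-- Case (3,3): a fully-weighted triangle in B together with a fully-weighted triangle in R,
all cross pairs fully weighted : impossible. -/
lemma C33 {b1 b2 b3 q1 q2 q3 : Fin 12}
    (hb1 : b1 ∈ C.Bs) (hb2 : b2 ∈ C.Bs) (hb3 : b3 ∈ C.Bs)
    (hq1 : q1 ∈ C.Rs) (hq2 : q2 ∈ C.Rs) (hq3 : q3 ∈ C.Rs)
    (db12 : b1 ≠ b2) (db13 : b1 ≠ b3) (db23 : b2 ≠ b3)
    (dq12 : q1 ≠ q2) (dq13 : q1 ≠ q3) (dq23 : q2 ≠ q3)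
    (fb12 : C.w b1 b2 = 1) (fb13 : C.w b1 b3 = 1) (fb23 : C.w b2 b3 = 1)
    (fc11 : C.w b1 q1 = 1) (fc12 : C.w b1 q2 = 1) (fc13 : C.w b1 q3 = 1)
    (fc21 : C.w b2 q1 = 1) (fc22 : C.w b2 q2 = 1) (fc23 : C.w b2 q3 = 1)
    (fc31 : C.w b3 q1 = 1) (fc32 : C.w b3 q2 = 1) (fc33 : C.w b3 q3 = 1) : False := by
  classical
  have hb1' := C.mem_Bs.mp hb1
  have hb2' := C.mem_Bs.mp hb2
  have hb3' := C.mem_Bs.mp hb3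
  have rb12 : C.red b1 b2 := C.notBlue (Ne.symm hb1'.1) (Ne.symm hb2'.1) db12 hb1'.2 hb2'.2
  have rb13 : C.red b1 b3 := C.notBlue (Ne.symm hb1'.1) (Ne.symm hb3'.1) db13 hb1'.2 hb3'.2
  have rb23 : C.red b2 b3 := C.notBlue (Ne.symm hb2'.1) (Ne.symm hb3'.1) db23 hb2'.2 hb3'.2
  -- B = {b1, b2, b3}
  have hBsub : C.Bs ⊆ {b1, b2, b3} := by
    intro b hb
    by_contra hbn
    simp only [Finset.mem_insert, Finset.mem_singleton] at hbn
    push_neg at hbn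
    obtain ⟨n1, n2, n3⟩ := hbn
    have hb' := C.mem_Bs.mp hb
    have r1 : C.red b1 b := C.notBlue (Ne.symm hb1'.1) (Ne.symm hb'.1) (Ne.symm n1) hb1'.2 hb'.2
    have r2 : C.red b2 b := C.notBlue (Ne.symm hb2'.1) (Ne.symm hb'.1) (Ne.symm n2) hb2'.2 hb'.2
    have r3 : C.red b3 b := C.notBlue (Ne.symm hb3'.1) (Ne.symm hb'.1) (Ne.symm n3) hb3'.2 hb'.2
    exact C.gk7_43 db12 db13 (Ne.symm n1) db23 (Ne.symm n2) (Ne.symm n3)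
      rb12 rb13 r1 rb23 r2 r3 fb12 fb13 fb23
  have hB3 : C.Bs.card = 3 := by
    have h1 := Finset.card_le_card hBsub
    have h2 : ({b1, b2, b3} : Finset (Fin 12)).card = 3 := cardS3 db12 db13 db23
    have h3 : ({b1, b2, b3} : Finset (Fin 12)) ⊆ C.Bs := by
      intro y hy
      simp only [Finset.mem_insert, Finset.mem_singleton] at hy
      rcases hy with rfl|rfl|rfl <;> assumption
    have h4 := Finset.card_le_card h3
    omega
  have hR8 : C.Rs.card = 8 := by
    have := C.card_RB
    omega
  -- covering
  have cover : ∀ r ∈ C.Rs, r ∈ C.Dset b1 ∨ r ∈ C.Dset b2 ∨ r ∈ C.Dset b3 := by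
    intro r hr
    by_contra hno
    push_neg at hno
    obtain ⟨n1, n2, n3⟩ := hno
    have r1 := C.red_of_notMem_Dset hr n1
    have r2 := C.red_of_notMem_Dset hr n2
    have r3 := C.red_of_notMem_Dset hr n3
    have hrR := C.mem_Rs.mp hr
    exact C.gk7_43 db12 db13 (C.neRB hb1'.2 hrR.2) db23 (C.neRB hb2'.2 hrR.2)
      (C.neRB hb3'.2 hrR.2) rb12 rb13 r1 rb23 r2 r3 fb12 fb13 fb23
  have hc1 := C.card_Dset_le hb1
  have hc2 := C.card_Dset_le hb2
  have hc3 := C.card_Dset_le hb3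
  have hsum8 : 8 ≤ (C.Dset b1).card + (C.Dset b2).card + (C.Dset b3).card := by
    have hsub : C.Rs ⊆ (C.Dset b1 ∪ C.Dset b2) ∪ C.Dset b3 := by
      intro r hr
      rcases cover r hr with h|h|h <;> simp [Finset.mem_union, h]
    have u1 := Finset.card_le_card hsub
    have u2 := Finset.card_union_le (C.Dset b1 ∪ C.Dset b2) (C.Dset b3)
    have u3 := Finset.card_union_le (C.Dset b1) (C.Dset b2)
    omega
  -- multiplicity function
  have hnil : True := trivial
  set n : Fin 12 → ℕ := fun r =>
    (if r ∈ C.Dset b1 then 1 else 0) + (if r ∈ C.Dset b2 then 1 else 0) +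
      (if r ∈ C.Dset b3 then 1 else 0) with hn
  have hDsum : ∀ D : Finset (Fin 12), D ⊆ C.Rs →
      ∑ r ∈ C.Rs, (if r ∈ D then (1:ℕ) else 0) = D.card := by
    intro D hD
    rw [Finset.sum_ite_mem, Finset.inter_eq_right.mpr hD, Finset.card_eq_sum_ones]
  have hnsum : ∑ r ∈ C.Rs, n r ≤ 9 := by
    have e : ∑ r ∈ C.Rs, n r = (C.Dset b1).card + (C.Dset b2).card + (C.Dset b3).card := by
      simp only [hn]
      rw [Finset.sum_add_distrib, Finset.sum_add_distrib,
        hDsum (C.Dset b1) (C.Dset_subset b1), hDsum (C.Dset b2) (C.Dset_subset b2),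
        hDsum (C.Dset b3) (C.Dset_subset b3)]
    omega
  have hone : ∀ r ∈ C.Rs, 1 ≤ n r := by
    intro r hr
    rcases cover r hr with h|h|h <;> simp only [hn] <;> split_ifs <;> omega
  have hmulti : ∀ y z : Fin 12, y ∈ C.Rs → z ∈ C.Rs → y ≠ z → 2 ≤ n y → 2 ≤ n z → False := by
    intro y z hy hz hyz ny nz
    have hzy : z ∈ C.Rs.erase y := Finset.mem_erase.mpr ⟨Ne.symm hyz, hz⟩
    have e1 : ∑ r ∈ (C.Rs.erase y), n r + n y = ∑ r ∈ C.Rs, n r :=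
      Finset.sum_erase_add _ _ hy
    have e2 : ∑ r ∈ ((C.Rs.erase y).erase z), n r + n z = ∑ r ∈ (C.Rs.erase y), n r :=
      Finset.sum_erase_add _ _ hzy
    have e3 : ((C.Rs.erase y).erase z).card = 6 := by
      rw [Finset.card_erase_of_mem hzy, Finset.card_erase_of_mem hy, hR8]
    have e4 : 6 ≤ ∑ r ∈ ((C.Rs.erase y).erase z), n r := by
      calc (6:ℕ) = ((C.Rs.erase y).erase z).card := e3.symm
      _ = ∑ _r ∈ ((C.Rs.erase y).erase z), 1 := (Finset.card_eq_sum_ones _)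
      _ ≤ ∑ r ∈ ((C.Rs.erase y).erase z), n r := Finset.sum_le_sum (fun i hi =>
          hone i (Finset.mem_of_mem_erase (Finset.mem_of_mem_erase hi)))
    omega
  -- two memberships give multiplicity ≥ 2
  have two12 : ∀ y, y ∈ C.Dset b1 → y ∈ C.Dset b2 → 2 ≤ n y := by
    intro y h1 h2
    simp only [hn, if_pos h1, if_pos h2]
    split_ifs <;> omega
  have two13 : ∀ y, y ∈ C.Dset b1 → y ∈ C.Dset b3 → 2 ≤ n y := by
    intro y h1 h2
    simp only [hn, if_pos h1, if_pos h2]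
    split_ifs <;> omega
  have two23 : ∀ y, y ∈ C.Dset b2 → y ∈ C.Dset b3 → 2 ≤ n y := by
    intro y h1 h2
    simp only [hn, if_pos h1, if_pos h2]
    split_ifs <;> omega
  have toN : ∀ y, y ∈ C.Rs →
      ((¬C.red b1 y ∧ ¬C.red b2 y) ∨ (¬C.red b1 y ∧ ¬C.red b3 y) ∨
        (¬C.red b2 y ∧ ¬C.red b3 y)) → 2 ≤ n y := by
    intro y hy h
    rcases h with ⟨u, v⟩|⟨u, v⟩|⟨u, v⟩
    · exact two12 y (C.mem_Dset.mpr ⟨hy, u⟩) (C.mem_Dset.mpr ⟨hy, v⟩)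
    · exact two13 y (C.mem_Dset.mpr ⟨hy, u⟩) (C.mem_Dset.mpr ⟨hy, v⟩)
    · exact two23 y (C.mem_Dset.mpr ⟨hy, u⟩) (C.mem_Dset.mpr ⟨hy, v⟩)
  have hM0 : ∀ y z : Fin 12, y ∈ C.Rs → z ∈ C.Rs → y ≠ z →
      ((¬C.red b1 y ∧ ¬C.red b2 y) ∨ (¬C.red b1 y ∧ ¬C.red b3 y) ∨
        (¬C.red b2 y ∧ ¬C.red b3 y)) →
      ((¬C.red b1 z ∧ ¬C.red b2 z) ∨ (¬C.red b1 z ∧ ¬C.red b3 z) ∨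
        (¬C.red b2 z ∧ ¬C.red b3 z)) → False :=
    fun y z hy hz hyz dy dz => hmulti y z hy hz hyz (toN y hy dy) (toN z hz dz)
  have hge2 : 2 ≤ (C.Dset b1).card ∧ 2 ≤ (C.Dset b2).card ∧ 2 ≤ (C.Dset b3).card := by
    omega
  -- exclusivity: a vertex with n ≤ 1 in some Dset is red to the other two b's
  have excl1 : ∀ y, y ∈ C.Rs → n y ≤ 1 → y ∈ C.Dset b1 → C.red b2 y ∧ C.red b3 y := by
    intro y hy hn1 h1
    constructor
    · by_contra hr
      exact absurd (two12 y h1 (C.mem_Dset.mpr ⟨hy, hr⟩)) (by omega)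
    · by_contra hr
      exact absurd (two13 y h1 (C.mem_Dset.mpr ⟨hy, hr⟩)) (by omega)
  have excl2 : ∀ y, y ∈ C.Rs → n y ≤ 1 → y ∈ C.Dset b2 → C.red b1 y ∧ C.red b3 y := by
    intro y hy hn1 h2
    constructor
    · by_contra hr
      exact absurd (two12 y (C.mem_Dset.mpr ⟨hy, hr⟩) h2) (by omega)
    · by_contra hr
      exact absurd (two23 y h2 (C.mem_Dset.mpr ⟨hy, hr⟩)) (by omega)
  have excl3 : ∀ y, y ∈ C.Rs → n y ≤ 1 → y ∈ C.Dset b3 → C.red b1 y ∧ C.red b2 y := by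
    intro y hy hn1 h3
    constructor
    · by_contra hr
      exact absurd (two13 y (C.mem_Dset.mpr ⟨hy, hr⟩) h3) (by omega)
    · by_contra hr
      exact absurd (two23 y (C.mem_Dset.mpr ⟨hy, hr⟩) h3) (by omega)
  -- main dispatch over two exclusive q's
  have EXCL : ∀ qa qb : Fin 12, qa ∈ C.Rs → qb ∈ C.Rs → qa ≠ qb → n qa ≤ 1 → n qb ≤ 1 →
      C.w b1 qa = 1 → C.w b2 qa = 1 → C.w b3 qa = 1 →
      C.w b1 qb = 1 → C.w b2 qb = 1 → C.w b3 qb = 1 → False := by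
    intro qa qb hqa hqb hne nqa nqb ga1 ga2 ga3 gb1 gb2 gb3
    have hM12 : ∀ y z : Fin 12, y ∈ C.Rs → z ∈ C.Rs → y ≠ z →
        ((¬C.red b1 y ∧ ¬C.red b2 y) ∨ (¬C.red b1 y ∧ ¬C.red b3 y) ∨
          (¬C.red b2 y ∧ ¬C.red b3 y)) →
        ((¬C.red b1 z ∧ ¬C.red b2 z) ∨ (¬C.red b1 z ∧ ¬C.red b3 z) ∨
          (¬C.red b2 z ∧ ¬C.red b3 z)) → False := hM0
    rcases cover qa hqa with ha|ha|ha <;> rcases cover qb hqb with hb|hb|hb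
    · -- both in Dset b1
      obtain ⟨ra2, ra3⟩ := excl1 qa hqa nqa ha
      obtain ⟨rc2, rc3⟩ := excl1 qb hqb nqb hb
      exact C.winC3 hb1 hb2 hb3 db23 fb23 hqa hqb hne ga2 ga3
        (C.mem_Dset.mp ha).2 (C.mem_Dset.mp hb).2 ra2 ra3 rc2 rc3
    · -- qa ∈ D1, qb ∈ D2 : neqC3 with (b1, b2, b3)
      obtain ⟨ra2, ra3⟩ := excl1 qa hqa nqa ha
      obtain ⟨rc1, rc3⟩ := excl2 qb hqb nqb hb
      exact C.neqC3 hb1 hb2 hb3 db13 db23 fb13 fb23 hqa hqb ga2 ga3 gb1 gb3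
        (C.mem_Dset.mp ha).2 ra2 ra3 (C.mem_Dset.mp hb).2 rc1 rc3
        hge2.1 hge2.2.1 hc3 (by omega) hM0
    · -- qa ∈ D1, qb ∈ D3 : neqC3 with (b1, b3, b2)
      obtain ⟨ra2, ra3⟩ := excl1 qa hqa nqa ha
      obtain ⟨rc1, rc2⟩ := excl3 qb hqb nqb hb
      exact C.neqC3 hb1 hb3 hb2 db12 (Ne.symm db23) fb12 (C.wsym' fb23) hqa hqb ga3 ga2
        gb1 gb2 (C.mem_Dset.mp ha).2 ra3 ra2 (C.mem_Dset.mp hb).2 rc1 rc2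
        hge2.1 hge2.2.2 hc2 (by omega)
        (fun y z hy hz hyz dy dz => hM0 y z hy hz hyz (by tauto) (by tauto))
    · -- qa ∈ D2, qb ∈ D1 : neqC3 with (b2, b1, b3)
      obtain ⟨ra1, ra3⟩ := excl2 qa hqa nqa ha
      obtain ⟨rc2, rc3⟩ := excl1 qb hqb nqb hb
      exact C.neqC3 hb2 hb1 hb3 db23 db13 fb23 fb13 hqa hqb ga1 ga3 gb2 gb3
        (C.mem_Dset.mp ha).2 ra1 ra3 (C.mem_Dset.mp hb).2 rc2 rc3
        hge2.2.1 hge2.1 hc3 (by omega)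
        (fun y z hy hz hyz dy dz => hM0 y z hy hz hyz (by tauto) (by tauto))
    · -- both in D2 : winC3 with (b2, b1, b3)
      obtain ⟨ra1, ra3⟩ := excl2 qa hqa nqa ha
      obtain ⟨rc1, rc3⟩ := excl2 qb hqb nqb hb
      exact C.winC3 hb2 hb1 hb3 db13 fb13 hqa hqb hne ga1 ga3
        (C.mem_Dset.mp ha).2 (C.mem_Dset.mp hb).2 ra1 ra3 rc1 rc3
    · -- qa ∈ D2, qb ∈ D3 : neqC3 with (b2, b3, b1)
      obtain ⟨ra1, ra3⟩ := excl2 qa hqa nqa ha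
      obtain ⟨rc1, rc2⟩ := excl3 qb hqb nqb hb
      exact C.neqC3 hb2 hb3 hb1 (Ne.symm db12) (Ne.symm db13) (C.wsym' fb12) (C.wsym' fb13)
        hqa hqb ga3 ga1 gb2 gb1 (C.mem_Dset.mp ha).2 ra3 ra1 (C.mem_Dset.mp hb).2 rc2 rc1
        hge2.2.1 hge2.2.2 hc1 (by omega)
        (fun y z hy hz hyz dy dz => hM0 y z hy hz hyz (by tauto) (by tauto))
    · -- qa ∈ D3, qb ∈ D1 : neqC3 with (b3, b1, b2)
      obtain ⟨ra1, ra2⟩ := excl3 qa hqa nqa ha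
      obtain ⟨rc2, rc3⟩ := excl1 qb hqb nqb hb
      exact C.neqC3 hb3 hb1 hb2 (Ne.symm db23) db12 (C.wsym' fb23) fb12
        hqa hqb ga1 ga2 gb3 gb2 (C.mem_Dset.mp ha).2 ra1 ra2 (C.mem_Dset.mp hb).2 rc3 rc2
        hge2.2.2 hge2.1 hc2 (by omega)
        (fun y z hy hz hyz dy dz => hM0 y z hy hz hyz (by tauto) (by tauto))
    · -- qa ∈ D3, qb ∈ D2 : neqC3 with (b3, b2, b1)
      obtain ⟨ra1, ra2⟩ := excl3 qa hqa nqa ha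
      obtain ⟨rc1, rc3⟩ := excl2 qb hqb nqb hb
      exact C.neqC3 hb3 hb2 hb1 (Ne.symm db13) (Ne.symm db12) (C.wsym' fb13) (C.wsym' fb12)
        hqa hqb ga2 ga1 gb3 gb1 (C.mem_Dset.mp ha).2 ra2 ra1 (C.mem_Dset.mp hb).2 rc3 rc1
        hge2.2.2 hge2.2.1 hc1 (by omega)
        (fun y z hy hz hyz dy dz => hM0 y z hy hz hyz (by tauto) (by tauto))
    · -- both in D3 : winC3 with (b3, b1, b2)
      obtain ⟨ra1, ra2⟩ := excl3 qa hqa nqa ha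
      obtain ⟨rc1, rc2⟩ := excl3 qb hqb nqb hb
      exact C.winC3 hb3 hb1 hb2 db12 fb12 hqa hqb hne ga1 ga2
        (C.mem_Dset.mp ha).2 (C.mem_Dset.mp hb).2 ra1 ra2 rc1 rc2
  by_cases m1 : 2 ≤ n q1
  · by_cases m2 : 2 ≤ n q2
    · exact hmulti q1 q2 hq1 hq2 dq12 m1 m2
    · by_cases m3 : 2 ≤ n q3
      · exact hmulti q1 q3 hq1 hq3 dq13 m1 m3
      · exact EXCL q2 q3 hq2 hq3 dq23 (by omega) (by omega)
          fc12 fc22 fc32 fc13 fc23 fc33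
  · by_cases m2 : 2 ≤ n q2
    · by_cases m3 : 2 ≤ n q3
      · exact hmulti q2 q3 hq2 hq3 dq23 m2 m3
      · exact EXCL q1 q3 hq1 hq3 dq13 (by omega) (by omega)
          fc11 fc21 fc31 fc13 fc23 fc33
    · exact EXCL q1 q2 hq1 hq2 dq12 (by omega) (by omega)
        fc11 fc21 fc31 fc12 fc22 fc32

end Ctx

namespace Ctx
variable (C : Ctx)

/-- MAIN COMBINATORIAL LEMMA: no 6 vertices outside v are pairwise fully weighted. -/
lemma noK6 : ∀ a b c d e f : Fin 12, a ∈ C.Es → b ∈ C.Es → c ∈ C.Es → d ∈ C.Es →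
    e ∈ C.Es → f ∈ C.Es →
    a ≠ b → a ≠ c → a ≠ d → a ≠ e → a ≠ f → b ≠ c → b ≠ d → b ≠ e → b ≠ f →
    c ≠ d → c ≠ e → c ≠ f → d ≠ e → d ≠ f → e ≠ f →
    C.w a b = 1 → C.w a c = 1 → C.w a d = 1 → C.w a e = 1 → C.w a f = 1 →
    C.w b c = 1 → C.w b d = 1 → C.w b e = 1 → C.w b f = 1 →
    C.w c d = 1 → C.w c e = 1 → C.w c f = 1 → C.w d e = 1 → C.w d f = 1 →
    C.w e f = 1 → False := by
  intro a b c d e f ha hb hc hd he hf nab nac nad nae naf nbc nbd nbe nbf ncd nce ncf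
    nde ndf nef fab fac fad fae faf fbc fbd fbe fbf fcd fce fcf fde fdf fef
  classical
  have hKcard : ({a,b,c,d,e,f} : Finset (Fin 12)).card = 6 :=
    cardS6 nab nac nad nae naf nbc nbd nbe nbf ncd nce ncf nde ndf nef
  have hKmem : ∀ x ∈ ({a,b,c,d,e,f} : Finset (Fin 12)), x ∈ C.Es := by
    intro x hx
    simp only [Finset.mem_insert, Finset.mem_singleton] at hx
    rcases hx with rfl|rfl|rfl|rfl|rfl|rfl <;> assumption
  have hKfull : ∀ x ∈ ({a,b,c,d,e,f} : Finset (Fin 12)),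
      ∀ y ∈ ({a,b,c,d,e,f} : Finset (Fin 12)), x ≠ y → C.w x y = 1 := by
    intro x hx y hy hxy
    simp only [Finset.mem_insert, Finset.mem_singleton] at hx hy
    rcases hx with rfl|rfl|rfl|rfl|rfl|rfl <;> rcases hy with rfl|rfl|rfl|rfl|rfl|rfl <;>
      first | exact absurd rfl hxy | assumption | exact C.wsym' ‹_›
  set KR := ({a,b,c,d,e,f} : Finset (Fin 12)).filter (fun x => C.red C.v x) with hKR
  set KP := ({a,b,c,d,e,f} : Finset (Fin 12)).filter (fun x => ¬ C.red C.v x) with hKP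
  have hcardsum : KR.card + KP.card = 6 := by
    rw [hKR, hKP, Finset.card_filter_add_card_filter_not, hKcard]
  have hKRK : ∀ x ∈ KR, x ∈ ({a,b,c,d,e,f} : Finset (Fin 12)) :=
    fun x hx => Finset.filter_subset _ _ hx
  have hKPK : ∀ x ∈ KP, x ∈ ({a,b,c,d,e,f} : Finset (Fin 12)) :=
    fun x hx => Finset.filter_subset _ _ hx
  have hKRmem : ∀ x ∈ KR, x ∈ C.Rs := by
    intro x hx
    exact C.mem_Rs.mpr ⟨C.mem_Es.mp (hKmem x (hKRK x hx)), (Finset.mem_filter.mp hx).2⟩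
  have hKPmem : ∀ x ∈ KP, x ∈ C.Bs := by
    intro x hx
    exact C.mem_Bs.mpr ⟨C.mem_Es.mp (hKmem x (hKPK x hx)), (Finset.mem_filter.mp hx).2⟩
  by_cases h5 : 5 ≤ KR.card
  · obtain ⟨q1, q2, q3, q4, q5, m1, m2, m3, m4, m5, e12, e13, e14, e15, e23, e24, e25,
      e34, e35, e45⟩ := pick5 h5
    exact C.C5full (hKRmem _ m1) (hKRmem _ m2) (hKRmem _ m3) (hKRmem _ m4) (hKRmem _ m5)
      e12 e13 e14 e15 e23 e24 e25 e34 e35 e45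
      (hKfull _ (hKRK _ m1) _ (hKRK _ m2) e12) (hKfull _ (hKRK _ m1) _ (hKRK _ m3) e13)
      (hKfull _ (hKRK _ m1) _ (hKRK _ m4) e14) (hKfull _ (hKRK _ m1) _ (hKRK _ m5) e15)
      (hKfull _ (hKRK _ m2) _ (hKRK _ m3) e23) (hKfull _ (hKRK _ m2) _ (hKRK _ m4) e24)
      (hKfull _ (hKRK _ m2) _ (hKRK _ m5) e25) (hKfull _ (hKRK _ m3) _ (hKRK _ m4) e34)
      (hKfull _ (hKRK _ m3) _ (hKRK _ m5) e35) (hKfull _ (hKRK _ m4) _ (hKRK _ m5) e45)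
  · by_cases h4 : KR.card = 4
    · have hKP2 : KP.card = 2 := by omega
      obtain ⟨q1, q2, q3, q4, m1, m2, m3, m4, e12, e13, e14, e23, e24, e34⟩ := destruct4 h4
      obtain ⟨b1, b2, p1, p2, p12⟩ := destruct2 hKP2
      exact C.C24 (hKRmem _ m1) (hKRmem _ m2) (hKRmem _ m3) (hKRmem _ m4)
        e12 e13 e14 e23 e24 e34
        (hKfull _ (hKRK _ m1) _ (hKRK _ m2) e12) (hKfull _ (hKRK _ m1) _ (hKRK _ m3) e13)
        (hKfull _ (hKRK _ m1) _ (hKRK _ m4) e14) (hKfull _ (hKRK _ m2) _ (hKRK _ m3) e23)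
        (hKfull _ (hKRK _ m2) _ (hKRK _ m4) e24) (hKfull _ (hKRK _ m3) _ (hKRK _ m4) e34)
        (hKPmem _ p1) (hKPmem _ p2) p12 (hKfull _ (hKPK _ p1) _ (hKPK _ p2) p12)
    · have h3' : KR.card = 3 ∨ KP.card ≥ 4 := by omega
      rcases h3' with h3|hP4
      · have hKP3 : KP.card = 3 := by omega
        obtain ⟨q1, q2, q3, m1, m2, m3, e12, e13, e23⟩ := destruct3 h3
        obtain ⟨b1, b2, b3, p1, p2, p3, g12, g13, g23⟩ := destruct3 hKP3
        exact C.C33 (hKPmem _ p1) (hKPmem _ p2) (hKPmem _ p3)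
          (hKRmem _ m1) (hKRmem _ m2) (hKRmem _ m3) g12 g13 g23 e12 e13 e23
          (hKfull _ (hKPK _ p1) _ (hKPK _ p2) g12) (hKfull _ (hKPK _ p1) _ (hKPK _ p3) g13)
          (hKfull _ (hKPK _ p2) _ (hKPK _ p3) g23)
          (hKfull _ (hKPK _ p1) _ (hKRK _ m1)
            (C.neRB (C.mem_Bs.mp (hKPmem _ p1)).2 (C.mem_Rs.mp (hKRmem _ m1)).2))
          (hKfull _ (hKPK _ p1) _ (hKRK _ m2)
            (C.neRB (C.mem_Bs.mp (hKPmem _ p1)).2 (C.mem_Rs.mp (hKRmem _ m2)).2))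
          (hKfull _ (hKPK _ p1) _ (hKRK _ m3)
            (C.neRB (C.mem_Bs.mp (hKPmem _ p1)).2 (C.mem_Rs.mp (hKRmem _ m3)).2))
          (hKfull _ (hKPK _ p2) _ (hKRK _ m1)
            (C.neRB (C.mem_Bs.mp (hKPmem _ p2)).2 (C.mem_Rs.mp (hKRmem _ m1)).2))
          (hKfull _ (hKPK _ p2) _ (hKRK _ m2)
            (C.neRB (C.mem_Bs.mp (hKPmem _ p2)).2 (C.mem_Rs.mp (hKRmem _ m2)).2))
          (hKfull _ (hKPK _ p2) _ (hKRK _ m3)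
            (C.neRB (C.mem_Bs.mp (hKPmem _ p2)).2 (C.mem_Rs.mp (hKRmem _ m3)).2))
          (hKfull _ (hKPK _ p3) _ (hKRK _ m1)
            (C.neRB (C.mem_Bs.mp (hKPmem _ p3)).2 (C.mem_Rs.mp (hKRmem _ m1)).2))
          (hKfull _ (hKPK _ p3) _ (hKRK _ m2)
            (C.neRB (C.mem_Bs.mp (hKPmem _ p3)).2 (C.mem_Rs.mp (hKRmem _ m2)).2))
          (hKfull _ (hKPK _ p3) _ (hKRK _ m3)
            (C.neRB (C.mem_Bs.mp (hKPmem _ p3)).2 (C.mem_Rs.mp (hKRmem _ m3)).2))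
      · obtain ⟨p1, p2, p3, p4, m1, m2, m3, m4, e12, e13, e14, e23, e24, e34⟩ := pick4 hP4
        have w1 := C.mem_Bs.mp (hKPmem _ m1)
        have w2 := C.mem_Bs.mp (hKPmem _ m2)
        have w3 := C.mem_Bs.mp (hKPmem _ m3)
        have w4 := C.mem_Bs.mp (hKPmem _ m4)
        exact C.gk7_43 e12 e13 e14 e23 e24 e34
          (C.notBlue (Ne.symm w1.1) (Ne.symm w2.1) e12 w1.2 w2.2)
          (C.notBlue (Ne.symm w1.1) (Ne.symm w3.1) e13 w1.2 w3.2)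
          (C.notBlue (Ne.symm w1.1) (Ne.symm w4.1) e14 w1.2 w4.2)
          (C.notBlue (Ne.symm w2.1) (Ne.symm w3.1) e23 w2.2 w3.2)
          (C.notBlue (Ne.symm w2.1) (Ne.symm w4.1) e24 w2.2 w4.2)
          (C.notBlue (Ne.symm w3.1) (Ne.symm w4.1) e34 w3.2 w4.2)
          (hKfull _ (hKPK _ m1) _ (hKPK _ m2) e12) (hKfull _ (hKPK _ m1) _ (hKPK _ m3) e13)
          (hKfull _ (hKPK _ m2) _ (hKPK _ m3) e23)

end Ctx

noncomputable def FFf (full : Fin 12 → Fin 12 → Prop) (s : Finset (Fin 12)) (u : Fin 12 → ℝ) : ℝ :=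
  ∑ i ∈ s, ∑ j ∈ s, if i ≠ j ∧ full i j then u i * u j else 0

noncomputable def ROWf (full : Fin 12 → Fin 12 → Prop) (x : Fin 12) (s : Finset (Fin 12))
    (u : Fin 12 → ℝ) : ℝ :=
  ∑ j ∈ s, if full x j then u j else 0

lemma FF_congr (full : Fin 12 → Fin 12 → Prop) {s : Finset (Fin 12)} {u u' : Fin 12 → ℝ}
    (h : ∀ x ∈ s, u x = u' x) : FFf full s u = FFf full s u' := by
  unfold FFf
  apply Finset.sum_congr rfl
  intro x hx
  apply Finset.sum_congr rfl
  intro y hy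
  by_cases hc : x ≠ y ∧ full x y
  · rw [if_pos hc, if_pos hc, h x hx, h y hy]
  · rw [if_neg hc, if_neg hc]

lemma ROW_congr (full : Fin 12 → Fin 12 → Prop) {x : Fin 12} {s : Finset (Fin 12)}
    {u u' : Fin 12 → ℝ} (h : ∀ y ∈ s, u y = u' y) : ROWf full x s u = ROWf full x s u' := by
  unfold ROWf
  apply Finset.sum_congr rfl
  intro y hy
  by_cases hc : full x y
  · rw [if_pos hc, if_pos hc, h y hy]
  · rw [if_neg hc, if_neg hc]

lemma FF_split (full : Fin 12 → Fin 12 → Prop) (hsym : ∀ i j, full i j → full j i)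
    {s : Finset (Fin 12)} {j : Fin 12} (hj : j ∈ s) (u : Fin 12 → ℝ) :
    FFf full s u = FFf full (s.erase j) u + 2 * (u j * ROWf full j (s.erase j) u) := by
  have hrow : ∀ i : Fin 12, i ∈ s.erase j →
      (∑ y ∈ s, if i ≠ y ∧ full i y then u i * u y else 0)
      = (∑ y ∈ s.erase j, if i ≠ y ∧ full i y then u i * u y else 0)
        + (if full i j then u i else 0) * u j := by
    intro i hi
    have hij : i ≠ j := (Finset.mem_erase.mp hi).1
    rw [← Finset.sum_erase_add s _ hj]
    congr 1
    by_cases hf : full i j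
    · rw [if_pos ⟨hij, hf⟩, if_pos hf]
    · rw [if_neg (fun hc => hf hc.2), if_neg hf, zero_mul]
  have hdiag : (∑ y ∈ s, if j ≠ y ∧ full j y then u j * u y else 0)
      = u j * ROWf full j (s.erase j) u := by
    rw [← Finset.sum_erase_add s _ hj]
    have h0 : (if j ≠ j ∧ full j j then u j * u j else 0) = 0 := by simp
    rw [h0, add_zero]
    unfold ROWf
    rw [Finset.mul_sum]
    apply Finset.sum_congr rfl
    intro y hy
    have hyj : j ≠ y := Ne.symm (Finset.mem_erase.mp hy).1
    by_cases hf : full j y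
    · rw [if_pos ⟨hyj, hf⟩, if_pos hf]
    · rw [if_neg (fun hc => hf hc.2), if_neg hf, mul_zero]
  have hcol : ∑ i ∈ s.erase j, (if full i j then u i else 0) * u j
      = (ROWf full j (s.erase j) u) * u j := by
    unfold ROWf
    rw [Finset.sum_mul]
    apply Finset.sum_congr rfl
    intro y hy
    congr 1
    by_cases hf : full y j
    · rw [if_pos hf, if_pos (hsym _ _ hf)]
    · rw [if_neg hf, if_neg (fun hf' => hf (hsym _ _ hf'))]
  have expand : FFf full s u
      = (∑ i ∈ s.erase j, ((∑ y ∈ s.erase j, if i ≠ y ∧ full i y then u i * u y else 0)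
          + (if full i j then u i else 0) * u j))
        + u j * ROWf full j (s.erase j) u := by
    unfold FFf
    rw [← Finset.sum_erase_add s _ hj, hdiag]
    congr 1
    exact Finset.sum_congr rfl hrow
  rw [expand, Finset.sum_add_distrib, hcol]
  unfold FFf
  ring



lemma MSbound (full : Fin 12 → Fin 12 → Prop) (hsym : ∀ i j, full i j → full j i) :
    ∀ N : ℕ, ∀ s : Finset (Fin 12), s.card ≤ N → ∀ u : Fin 12 → ℝ, (∀ i, 0 ≤ u i) →
    (∀ a b c d e f : Fin 12, a ∈ s → b ∈ s → c ∈ s → d ∈ s → e ∈ s → f ∈ s →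
      a ≠ b → a ≠ c → a ≠ d → a ≠ e → a ≠ f → b ≠ c → b ≠ d → b ≠ e → b ≠ f →
      c ≠ d → c ≠ e → c ≠ f → d ≠ e → d ≠ f → e ≠ f →
      full a b → full a c → full a d → full a e → full a f →
      full b c → full b d → full b e → full b f →
      full c d → full c e → full c f → full d e → full d f → full e f → False) →
    FFf full s u ≤ 4/5 * (∑ i ∈ s, u i)^2 := by
  intro N
  induction N with
  | zero =>
    intro s hs u hu _
    have : s = ∅ := Finset.card_eq_zero.mp (Nat.le_zero.mp hs)
    subst this
    simp [FFf]
  | succ N ih =>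
    intro s hs u hu h6
    by_cases hcl : ∀ i ∈ s, ∀ j ∈ s, i ≠ j → full i j
    · -- clique case
      have hc5 : s.card ≤ 5 := by
        by_contra hgt
        push_neg at hgt
        obtain ⟨a, b, c, d, e, f, ha, hb, hc, hd, he, hf, nab, nac, nad, nae, naf,
          nbc, nbd, nbe, nbf, ncd, nce, ncf, nde, ndf, nef⟩ := pick6 hgt
        exact h6 a b c d e f ha hb hc hd he hf nab nac nad nae naf nbc nbd nbe nbf
          ncd nce ncf nde ndf nef
          (hcl a ha b hb nab) (hcl a ha c hc nac) (hcl a ha d hd nad) (hcl a ha e he nae)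
          (hcl a ha f hf naf) (hcl b hb c hc nbc) (hcl b hb d hd nbd) (hcl b hb e he nbe)
          (hcl b hb f hf nbf) (hcl c hc d hd ncd) (hcl c hc e he nce) (hcl c hc f hf ncf)
          (hcl d hd e he nde) (hcl d hd f hf ndf) (hcl e he f hf nef)
      have hrow : ∀ i ∈ s, (∑ y ∈ s, if i ≠ y ∧ full i y then u i * u y else 0)
          = u i * (∑ y ∈ s, u y) - u i * u i := by
        intro i hi
        have e1 : (∑ y ∈ s, if i ≠ y ∧ full i y then u i * u y else 0)
            = ∑ y ∈ s.erase i, u i * u y := by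
          rw [← Finset.sum_erase_add s _ hi]
          have h0 : (if i ≠ i ∧ full i i then u i * u i else 0) = 0 := by simp
          rw [h0, add_zero]
          apply Finset.sum_congr rfl
          intro y hy
          have hiy : i ≠ y := Ne.symm (Finset.mem_erase.mp hy).1
          rw [if_pos ⟨hiy, hcl i hi y (Finset.mem_of_mem_erase hy) hiy⟩]
        rw [e1, ← Finset.mul_sum, Finset.sum_erase_eq_sub hi, mul_sub]
      have hFF : FFf full s u = (∑ i ∈ s, u i)^2 - ∑ i ∈ s, (u i)^2 := by
        unfold FFf
        rw [Finset.sum_congr rfl hrow, Finset.sum_sub_distrib, ← Finset.sum_mul, sq]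
        congr 1
        apply Finset.sum_congr rfl
        intro i _
        ring
      have hCS : (∑ i ∈ s, u i)^2 ≤ 5 * ∑ i ∈ s, (u i)^2 := by
        have h1 := Finset.sum_mul_sq_le_sq_mul_sq s u (fun _ => 1)
        simp only [mul_one, one_pow] at h1
        have h2 : (∑ _i ∈ s, (1:ℝ)) = (s.card : ℝ) := by
          rw [Finset.sum_const, nsmul_eq_mul, mul_one]
        rw [h2] at h1
        have h3 : (0:ℝ) ≤ ∑ i ∈ s, (u i)^2 := Finset.sum_nonneg (fun i _ => sq_nonneg _)
        have h4 : (s.card : ℝ) ≤ 5 := by exact_mod_cast hc5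
        nlinarith
      rw [hFF]
      nlinarith [hCS]
    · -- non-clique case
      push_neg at hcl
      obtain ⟨i, hi, j, hj, hij, hnf⟩ := hcl
      have main : ∀ i j : Fin 12, i ∈ s → j ∈ s → i ≠ j → ¬ full i j →
          ROWf full j ((s.erase j).erase i) u ≤ ROWf full i ((s.erase j).erase i) u →
          FFf full s u ≤ 4/5 * (∑ x ∈ s, u x)^2 := by
        clear hi hj hij hnf i j
        intro i j hi hj hij hnf hle
        have hit : i ∈ s.erase j := Finset.mem_erase.mpr ⟨hij, hi⟩
        have hrowj : ROWf full j (s.erase j) u = ROWf full j ((s.erase j).erase i) u := by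
          unfold ROWf
          rw [← Finset.sum_erase_add (s.erase j) _ hit]
          have h0 : (if full j i then u i else 0) = 0 :=
            if_neg (fun hf => hnf (hsym _ _ hf))
          rw [h0, add_zero]
        have h1 : FFf full s u = FFf full (s.erase j) u
            + 2 * (u j * ROWf full j ((s.erase j).erase i) u) := by
          rw [FF_split full hsym hj u, hrowj]
        set u' : Fin 12 → ℝ := fun y => if y = i then u i + u j else u y with hu'
        have hu'i : u' i = u i + u j := by rw [hu']; simp
        have hcongr : ∀ x ∈ (s.erase j).erase i, u x = u' x := by
          intro x hx
          have : x ≠ i := (Finset.mem_erase.mp hx).1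
          rw [hu']
          simp [this]
        have h2 : FFf full (s.erase j) u' = FFf full (s.erase j) u
            + 2 * (u j * ROWf full i ((s.erase j).erase i) u) := by
          rw [FF_split full hsym hit u', FF_split full hsym hit u]
          rw [← FF_congr full hcongr, ← ROW_congr full hcongr, hu'i]
          ring
        have hsum' : ∑ x ∈ s.erase j, u' x = ∑ x ∈ s, u x := by
          rw [← Finset.sum_erase_add (s.erase j) u' hit, ← Finset.sum_erase_add s u hj,
            ← Finset.sum_erase_add (s.erase j) u hit, hu'i,
            ← (Finset.sum_congr rfl hcongr :
              ∑ x ∈ (s.erase j).erase i, u x = ∑ x ∈ (s.erase j).erase i, u' x)]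
          ring
        have hcard : (s.erase j).card ≤ N := by
          have h1 : (s.erase j).card = s.card - 1 := Finset.card_erase_of_mem hj
          have h2 : 1 ≤ s.card := Finset.card_pos.mpr ⟨j, hj⟩
          omega
        have hu'pos : ∀ y, 0 ≤ u' y := by
          intro y
          rw [hu']
          dsimp only
          split_ifs
          · exact add_nonneg (hu i) (hu j)
          · exact hu y
        have h6' : ∀ a b c d e f : Fin 12, a ∈ s.erase j → b ∈ s.erase j → c ∈ s.erase j →
            d ∈ s.erase j → e ∈ s.erase j → f ∈ s.erase j →
            a ≠ b → a ≠ c → a ≠ d → a ≠ e → a ≠ f → b ≠ c → b ≠ d → b ≠ e → b ≠ f →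
            c ≠ d → c ≠ e → c ≠ f → d ≠ e → d ≠ f → e ≠ f →
            full a b → full a c → full a d → full a e → full a f →
            full b c → full b d → full b e → full b f →
            full c d → full c e → full c f → full d e → full d f → full e f → False := by
          intro a b c d e f ha hb hc hd he hf
          exact h6 a b c d e f (Finset.mem_of_mem_erase ha) (Finset.mem_of_mem_erase hb)
            (Finset.mem_of_mem_erase hc) (Finset.mem_of_mem_erase hd)
            (Finset.mem_of_mem_erase he) (Finset.mem_of_mem_erase hf)
        have hih := ih (s.erase j) hcard u' hu'pos h6'
        have hstep : FFf full s u ≤ FFf full (s.erase j) u' := by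
          rw [h1, h2]
          have := mul_le_mul_of_nonneg_left hle (hu j)
          linarith
        calc FFf full s u ≤ FFf full (s.erase j) u' := hstep
        _ ≤ 4/5 * (∑ x ∈ s.erase j, u' x)^2 := hih
        _ = 4/5 * (∑ x ∈ s, u x)^2 := by rw [hsum']
      rcases le_total (ROWf full j ((s.erase j).erase i) u)
          (ROWf full i ((s.erase j).erase i) u) with h|h
      · exact main i j hi hj hij hnf h
      · apply main j i hj hi (Ne.symm hij) (fun hf => hnf (hsym _ _ hf))
        rw [Finset.erase_right_comm]
        exact h



namespace Ctx
variable (C : Ctx)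

lemma Es_def : C.Es = Finset.univ.erase C.v := rfl

/-- The analytic part: the density bound fails. -/
lemma analytic (u : Fin 12 → ℝ) (hu : ∀ i, 0 ≤ u i) (hu1 : ∑ i, u i = 1)
    (hge : 7/16 ≤ ∑ i, ∑ j, if i < j then C.w i j * u i * u j else 0) : False := by
  classical
  -- symmetric double sum
  have hP : (∑ i, ∑ j, if i ≠ j then C.w i j * u i * u j else 0)
      = 2 * ∑ i, ∑ j, if i < j then C.w i j * u i * u j else 0 := by
    have h1 : ∀ i : Fin 12, ∀ j : Fin 12, (if i ≠ j then C.w i j * u i * u j else 0)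
        = (if i < j then C.w i j * u i * u j else 0)
          + (if j < i then C.w i j * u i * u j else 0) := by
      intro i j
      rcases lt_trichotomy i j with h|h|h
      · rw [if_pos h.ne, if_pos h, if_neg (asymm h), add_zero]
      · subst h; simp
      · rw [if_pos h.ne', if_neg (asymm h), if_pos h, zero_add]
    have h2 : (∑ i, ∑ j, if i ≠ j then C.w i j * u i * u j else 0)
        = (∑ i, ∑ j, if i < j then C.w i j * u i * u j else 0)
          + (∑ i : Fin 12, ∑ j, if j < i then C.w i j * u i * u j else 0) := by
      rw [← Finset.sum_add_distrib]
      apply Finset.sum_congr rfl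
      intro i _
      rw [← Finset.sum_add_distrib]
      exact Finset.sum_congr rfl (fun j _ => h1 i j)
    have h3 : (∑ i : Fin 12, ∑ j, if j < i then C.w i j * u i * u j else 0)
        = (∑ i, ∑ j, if i < j then C.w i j * u i * u j else 0) := by
      rw [Finset.sum_comm]
      apply Finset.sum_congr rfl
      intro i _
      apply Finset.sum_congr rfl
      intro j _
      by_cases h : i < j
      · rw [if_pos h, if_pos h, C.hwsymm j i]
        ring
      · rw [if_neg h, if_neg h]
    rw [h2, h3]
    ring
  have hP2 : 7/8 ≤ ∑ i, ∑ j, if i ≠ j then C.w i j * u i * u j else 0 := by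
    rw [hP]; linarith
  set a := u C.v with ha
  set T := ∑ x ∈ C.Es, u x with hT
  have haT : a + T = 1 := by
    have h := Finset.sum_erase_add Finset.univ u (Finset.mem_univ C.v)
    rw [hT, C.Es_def]
    rw [hu1] at h
    linarith
  have hT0 : 0 ≤ T := by
    rw [hT]
    exact Finset.sum_nonneg (fun i _ => hu i)
  -- row at v
  have hrowv : (∑ j, if C.v ≠ j then C.w C.v j * u C.v * u j else 0) = a * T := by
    rw [← Finset.sum_erase_add Finset.univ _ (Finset.mem_univ C.v)]
    have h0 : (if C.v ≠ C.v then C.w C.v C.v * u C.v * u C.v else 0) = 0 := by simp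
    rw [h0, add_zero, hT, C.Es_def, Finset.mul_sum]
    apply Finset.sum_congr rfl
    intro j hj
    have hjv : j ≠ C.v := (Finset.mem_erase.mp hj).1
    rw [if_pos (Ne.symm hjv), C.hvfull j hjv]
    ring
  -- rows for i ≠ v
  have hcol : ∀ i ∈ C.Es, (∑ j, if i ≠ j then C.w i j * u i * u j else 0)
      = (∑ j ∈ C.Es, if i ≠ j then C.w i j * u i * u j else 0) + u i * a := by
    intro i hi
    have hiv : i ≠ C.v := C.mem_Es.mp hi
    rw [← Finset.sum_erase_add Finset.univ _ (Finset.mem_univ C.v), ← C.Es_def]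
    congr 1
    rw [if_pos hiv, C.wsym' (C.hvfull i hiv), ha]
    ring
  have hsplit : (∑ i, ∑ j, if i ≠ j then C.w i j * u i * u j else 0)
      = 2*(a*T) + ∑ i ∈ C.Es, ∑ j ∈ C.Es, (if i ≠ j then C.w i j * u i * u j else 0) := by
    rw [← Finset.sum_erase_add Finset.univ _ (Finset.mem_univ C.v), hrowv, ← C.Es_def,
      Finset.sum_congr rfl hcol, Finset.sum_add_distrib, ← Finset.sum_mul]
    rw [← hT]
    ring
  -- pointwise bound
  have hpoint : ∀ i ∈ C.Es, ∀ j ∈ C.Es, (if i ≠ j then C.w i j * u i * u j else 0)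
      ≤ (1/2) * (if i ≠ j then u i * u j else 0)
        + (1/2) * (if i ≠ j ∧ C.w i j = 1 then u i * u j else 0) := by
    intro i _ j _
    by_cases hij : i ≠ j
    · rcases C.hwval i j hij with h|h
      · have hnf : ¬(i ≠ j ∧ C.w i j = 1) := by
          rintro ⟨-, hc⟩
          rw [h] at hc
          norm_num at hc
        rw [if_pos hij, if_pos hij, if_neg hnf, h]
        apply le_of_eq
        ring
      · rw [if_pos hij, if_pos hij, if_pos ⟨hij, h⟩, h]
        apply le_of_eq
        ring
    · simp [hij]
  have hPP : (∑ i ∈ C.Es, ∑ j ∈ C.Es, if i ≠ j then C.w i j * u i * u j else 0)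
      ≤ (1/2) * (∑ i ∈ C.Es, ∑ j ∈ C.Es, if i ≠ j then u i * u j else 0)
        + (1/2) * FFf (fun i j => C.w i j = 1) C.Es u := by
    unfold FFf
    calc (∑ i ∈ C.Es, ∑ j ∈ C.Es, if i ≠ j then C.w i j * u i * u j else 0)
        ≤ ∑ i ∈ C.Es, ∑ j ∈ C.Es, ((1/2) * (if i ≠ j then u i * u j else 0)
          + (1/2) * (if i ≠ j ∧ C.w i j = 1 then u i * u j else 0)) :=
      Finset.sum_le_sum (fun i hi => Finset.sum_le_sum (fun j hj => hpoint i hi j hj))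
    _ = (1/2) * (∑ i ∈ C.Es, ∑ j ∈ C.Es, if i ≠ j then u i * u j else 0)
        + (1/2) * ∑ i ∈ C.Es, ∑ j ∈ C.Es, (if i ≠ j ∧ C.w i j = 1 then u i * u j else 0) := by
      simp only [Finset.sum_add_distrib, Finset.mul_sum]
  -- the plain pair sum
  set Q := ∑ i ∈ C.Es, (u i)^2 with hQ
  have hTQ : (∑ i ∈ C.Es, ∑ j ∈ C.Es, if i ≠ j then u i * u j else 0) = T^2 - Q := by
    have hrow : ∀ i ∈ C.Es, (∑ j ∈ C.Es, if i ≠ j then u i * u j else 0)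
        = u i * T - (u i)^2 := by
      intro i hi
      rw [← Finset.sum_erase_add C.Es _ hi]
      have h0 : (if i ≠ i then u i * u i else 0) = 0 := by simp
      rw [h0, add_zero]
      have hc : ∀ j ∈ C.Es.erase i, (if i ≠ j then u i * u j else 0) = u i * u j := by
        intro j hj
        rw [if_pos (Ne.symm (Finset.mem_erase.mp hj).1)]
      rw [Finset.sum_congr rfl hc, ← Finset.mul_sum, Finset.sum_erase_eq_sub hi, ← hT]
      ring
    rw [Finset.sum_congr rfl hrow, Finset.sum_sub_distrib, ← Finset.sum_mul, ← hT, ← hQ, sq]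
  -- Motzkin-Straus bound
  have hMS : FFf (fun i j => C.w i j = 1) C.Es u ≤ 4/5 * T^2 := by
    have hsym : ∀ i j : Fin 12, (fun i j => C.w i j = 1) i j → (fun i j => C.w i j = 1) j i :=
      fun i j h => C.wsym' h
    have := MSbound (fun i j => C.w i j = 1) hsym 11 C.Es (le_of_eq C.card_Es) u hu
      (fun a b c d e f ha hb hc hd he hf => C.noK6 a b c d e f ha hb hc hd he hf)
    rw [← hT] at this
    exact this
  -- Cauchy-Schwarz
  have hCS : T^2 ≤ 11 * Q := by
    have h1 := Finset.sum_mul_sq_le_sq_mul_sq C.Es u (fun _ => 1)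
    simp only [mul_one, one_pow] at h1
    have h2 : (∑ _i ∈ C.Es, (1:ℝ)) = (11 : ℝ) := by
      rw [Finset.sum_const, nsmul_eq_mul, mul_one, C.card_Es]
      norm_num
    rw [h2] at h1
    rw [hT, hQ]
    linarith
  have hQ0 : 0 ≤ Q := Finset.sum_nonneg (fun i _ => sq_nonneg _)
  have ha0 : 0 ≤ a := hu C.v
  -- final contradiction
  have hfin : 7/8 ≤ 2*(a*T) + ((1/2) * (T^2 - Q) + (1/2) * (4/5 * T^2)) := by
    have := hPP.trans (by linarith [hMS, hTQ.le, hTQ.ge] :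
      (1/2) * (∑ i ∈ C.Es, ∑ j ∈ C.Es, if i ≠ j then u i * u j else 0)
        + (1/2) * FFf (fun i j => C.w i j = 1) C.Es u
      ≤ (1/2) * (T^2 - Q) + (1/2) * (4/5 * T^2))
    linarith [hsplit ▸ hP2]
  have hTa : T = 1 - a := by linarith
  rw [hTa] at hfin hCS
  nlinarith [sq_nonneg (63*a - 8), hfin, hCS, hQ0, ha0]

end Ctx

end OneHalfK12



/-- Claim t=12: in a weighted 2-colored K₁₂ (weights in {1/2, 1}) with no blue triangle, no
red generalized K₇, and density at least 7/16, every vertex is incident to at least one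
half edge. -/
theorem one_half_edge_K12 (w : Fin 12 → Fin 12 → ℝ) (red : Fin 12 → Fin 12 → Prop)
    (hwsymm : ∀ i j, w i j = w j i)
    (hwval : ∀ i j : Fin 12, i ≠ j → w i j = 1 / 2 ∨ w i j = 1)
    (hredsymm : ∀ i j, red i j ↔ red j i)
    (hnoBlueTriangle : ∀ a b c : Fin 12, a ≠ b → a ≠ c → b ≠ c →
        red a b ∨ red a c ∨ red b c)
    (hnoRedGenK7 : ¬ ∃ X Y : Finset (Fin 12), Y ⊆ X ∧ X.card + Y.card = 7 ∧
        (∀ i ∈ X, ∀ j ∈ X, i ≠ j → red i j) ∧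
        (∀ i ∈ Y, ∀ j ∈ Y, i ≠ j → w i j = 1))
    (hdens : ∃ u : Fin 12 → ℝ, (∀ i, 0 ≤ u i) ∧ ∑ i, u i = 1 ∧
        7 / 16 ≤ ∑ i, ∑ j, if i < j then w i j * u i * u j else 0) :
    ∀ i : Fin 12, ∃ j : Fin 12, j ≠ i ∧ w i j = 1 / 2 := by
  classical
  intro v
  by_contra hcon
  push_neg at hcon
  have hv : ∀ j, j ≠ v → w v j = 1 := fun j hj =>
    (hwval v j (fun h => hj h.symm)).resolve_left (hcon j hj)
  obtain ⟨u, hu0, hu1, hge⟩ := hdens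
  exact (⟨w, red, hwsymm, hwval, hredsymm, hnoBlueTriangle, hnoRedGenK7, v, hv⟩ :
    OneHalfK12.Ctx).analytic u hu0 hu1 hge
end

section
/- For every μ with 0 < μ < 1/8 there exist ε > 0 and β > 0 such that the following holds. Let G be a simple graph together with a partition of its edges into red and blue, let R denote the spanning subgraph of red edges, and let V₁, V₂, V₃ be pairwise disjoint sets of vertices of G, each of the same size s with β·s ≥ 1. Suppose that for every pair i ≠ j the pair (V_i, V_j) is ε-regular in R with red density d_R(V_i, V_j) ≥ 1/2 + 2μ, and that every subset of any V_i of size at least β·s contains at least one red edge. Then G contains six vertices, exactly two in each V_i, such that all fifteen pairs among them are red edges of G (i.e., a red clique K₆). -/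
/-- Number of ordered pairs (x, y) with x ∈ X, y ∈ Y forming an edge of R; for disjoint
X, Y this is the number of edges of R between X and Y. -/
noncomputable def crossEdges {n : ℕ} (R : SimpleGraph (Fin n))
    (X Y : Finset (Fin n)) : ℕ :=
  Set.ncard {p : Fin n × Fin n | p.1 ∈ X ∧ p.2 ∈ Y ∧ R.Adj p.1 p.2}

/-- Edge density of R between X and Y. -/
noncomputable def pairDensity {n : ℕ} (R : SimpleGraph (Fin n))
    (X Y : Finset (Fin n)) : ℝ :=
  (crossEdges R X Y : ℝ) / ((X.card : ℝ) * (Y.card : ℝ))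

/-- (X, Y) is an ε-regular pair in R. -/
def IsRegularPair {n : ℕ} (ε : ℝ) (R : SimpleGraph (Fin n))
    (X Y : Finset (Fin n)) : Prop :=
  ∀ X' ⊆ X, ∀ Y' ⊆ Y, ε * X.card ≤ (X'.card : ℝ) → ε * Y.card ≤ (Y'.card : ℝ) →
    |pairDensity R X Y - pairDensity R X' Y'| ≤ ε

open Finset
open scoped Classical

lemma crossEdges_eq_sum {n : ℕ} (R : SimpleGraph (Fin n)) (X Y : Finset (Fin n)) :
    crossEdges R X Y = ∑ x ∈ X, (Y.filter (R.Adj x)).card := by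
  unfold crossEdges
  have h : {p : Fin n × Fin n | p.1 ∈ X ∧ p.2 ∈ Y ∧ R.Adj p.1 p.2} =
      ↑((X ×ˢ Y).filter fun p => R.Adj p.1 p.2) := by
    ext p; simp [Finset.mem_product, and_assoc]
  rw [h, Set.ncard_coe_finset, Finset.card_filter, Finset.sum_product]
  exact Finset.sum_congr rfl fun x _ => (Finset.card_filter _ _).symm

lemma badset {n : ℕ} {ε d : ℝ} (hε : 0 < ε) (R : SimpleGraph (Fin n))
    {X Y : Finset (Fin n)} (Y' : Finset (Fin n))
    (hreg : IsRegularPair ε R X Y) (hY' : Y' ⊆ Y)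
    (hY's : ε * Y.card ≤ Y'.card) (hY'pos : 0 < (Y'.card : ℝ))
    (hXpos : 0 < (X.card : ℝ))
    (hd : d ≤ pairDensity R X Y) :
    ((X.filter fun x => ((Y'.filter (R.Adj x)).card : ℝ) < (d - ε) * Y'.card).card : ℝ)
      < ε * X.card := by
  by_contra hcon
  push_neg at hcon
  set B := X.filter fun x => ((Y'.filter (R.Adj x)).card : ℝ) < (d - ε) * Y'.card with hB
  have hBX : B ⊆ X := Finset.filter_subset _ _
  have hBpos : 0 < (B.card : ℝ) := lt_of_lt_of_le (by positivity) hcon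
  have hBne : B.Nonempty := Finset.card_pos.mp (by exact_mod_cast hBpos)
  have hreg' := hreg B hBX Y' hY' hcon hY's
  have hsum : (crossEdges R B Y' : ℝ) < B.card * ((d - ε) * Y'.card) := by
    rw [crossEdges_eq_sum]
    push_cast
    calc (∑ x ∈ B, ((Y'.filter (R.Adj x)).card : ℝ))
        < ∑ _x ∈ B, (d - ε) * Y'.card := by
          apply Finset.sum_lt_sum_of_nonempty hBne
          intro x hx
          exact (Finset.mem_filter.mp hx).2
      _ = B.card * ((d - ε) * Y'.card) := by
          rw [Finset.sum_const, nsmul_eq_mul]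
  have hdens : pairDensity R B Y' < d - ε := by
    unfold pairDensity
    rw [div_lt_iff₀ (by positivity)]
    calc (crossEdges R B Y' : ℝ) < B.card * ((d - ε) * Y'.card) := hsum
      _ = (d - ε) * (B.card * Y'.card) := by ring
  have habs := abs_le.mp hreg'
  linarith [habs.2]

lemma common_nbhd {n : ℕ} (R : SimpleGraph (Fin n)) (u u' : Fin n)
    (A : Finset (Fin n)) :
    ((A.filter (R.Adj u)).card : ℝ) + ((A.filter (R.Adj u')).card : ℝ) - A.card
      ≤ ((A.filter fun y => R.Adj u y ∧ R.Adj u' y).card : ℝ) := by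
  rw [Finset.filter_and]
  have h1 := Finset.card_inter_add_card_union (A.filter (R.Adj u)) (A.filter (R.Adj u'))
  have h2 : ((A.filter (R.Adj u)) ∪ (A.filter (R.Adj u'))).card ≤ A.card :=
    Finset.card_le_card (Finset.union_subset (Finset.filter_subset _ _) (Finset.filter_subset _ _))
  have h1' : (((A.filter (R.Adj u)) ∩ (A.filter (R.Adj u'))).card : ℝ)
      + (((A.filter (R.Adj u)) ∪ (A.filter (R.Adj u'))).card : ℝ)
      = ((A.filter (R.Adj u)).card : ℝ) + ((A.filter (R.Adj u')).card : ℝ) := by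
    exact_mod_cast congrArg (Nat.cast : ℕ → ℝ) h1
  have h2' : (((A.filter (R.Adj u)) ∪ (A.filter (R.Adj u'))).card : ℝ) ≤ A.card := by
    exact_mod_cast h2
  linarith

set_option maxHeartbeats 2000000 in
/-- Embedding lemma: three pairwise ε-regular red pairs of density at least 1/2 + 2μ,
each part having no red-edge-free subset of size β·s, force a red K₆ with exactly two
vertices in each part. -/
theorem red_K6_from_regular_triple :
    ∀ μ : ℝ, 0 < μ → μ < 1 / 8 → ∃ ε : ℝ, 0 < ε ∧ ∃ β : ℝ, 0 < β ∧
      ∀ (n : ℕ) (G R B : SimpleGraph (Fin n)), R ⊔ B = G → R ⊓ B = ⊥ →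
        ∀ (V : Fin 3 → Finset (Fin n)) (s : ℕ),
          (∀ i, (V i).card = s) →
          (∀ i j, i ≠ j → Disjoint (V i) (V j)) →
          1 ≤ β * s →
          (∀ i j, i ≠ j → IsRegularPair ε R (V i) (V j)) →
          (∀ i j, i ≠ j → 1 / 2 + 2 * μ ≤ pairDensity R (V i) (V j)) →
          (∀ i : Fin 3, ∀ S ⊆ V i, β * s ≤ (S.card : ℝ) → ∃ x ∈ S, ∃ y ∈ S, R.Adj x y) →
          ∃ f : Fin 3 × Fin 2 → Fin n, Function.Injective f ∧
            (∀ i : Fin 3, ∀ k : Fin 2, f (i, k) ∈ V i) ∧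
            (∀ a b : Fin 3 × Fin 2, a ≠ b → R.Adj (f a) (f b)) := by
  intro μ hμ0 hμ8
  refine ⟨μ, hμ0, 4 * μ ^ 2, by positivity, ?_⟩
  intro n G Rg Bg hGRB hRBbot V s hcard hdisj hβs hreg hden hind
  have hμs : (0:ℝ) < 4 * μ ^ 2 := by positivity
  have hs0 : 0 < (s : ℝ) := by nlinarith
  -- Stage 1: bad sets in V 0 towards V 1 and V 2
  have hyb : ∀ j : Fin 3, μ * ((V j).card : ℝ) ≤ ((V j).card : ℝ) := by
    intro j; rw [hcard]; nlinarith
  have hyp : ∀ j : Fin 3, 0 < ((V j).card : ℝ) := by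
    intro j; rw [hcard]; exact hs0
  have h01 := badset hμ0 Rg (V 1) (hreg 0 1 (by decide)) (Finset.Subset.refl _)
      (hyb 1) (hyp 1) (hyp 0) (hden 0 1 (by decide))
  have h02 := badset hμ0 Rg (V 2) (hreg 0 2 (by decide)) (Finset.Subset.refl _)
      (hyb 2) (hyp 2) (hyp 0) (hden 0 2 (by decide))
  set Bad1 := (V 0).filter fun x =>
    (((V 1).filter (Rg.Adj x)).card : ℝ) < (1 / 2 + 2 * μ - μ) * ((V 1).card : ℝ) with hBad1
  set Bad2 := (V 0).filter fun x =>
    (((V 2).filter (Rg.Adj x)).card : ℝ) < (1 / 2 + 2 * μ - μ) * ((V 2).card : ℝ) with hBad2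
  set W₁ := (V 0) \ (Bad1 ∪ Bad2) with hW₁
  have hW₁sub : W₁ ⊆ V 0 := Finset.sdiff_subset
  have hW₁card : (1 - 2 * μ) * s < (W₁.card : ℝ) := by
    have h1 : W₁.card + (Bad1 ∪ Bad2).card = ((V 0) ∪ (Bad1 ∪ Bad2)).card :=
      Finset.card_sdiff_add_card _ _
    have h2 : (V 0).card ≤ ((V 0) ∪ (Bad1 ∪ Bad2)).card :=
      Finset.card_le_card Finset.subset_union_left
    have h3 : (Bad1 ∪ Bad2).card ≤ Bad1.card + Bad2.card := Finset.card_union_le _ _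
    have h1' : (W₁.card : ℝ) + ((Bad1 ∪ Bad2).card : ℝ) = (((V 0) ∪ (Bad1 ∪ Bad2)).card : ℝ) := by
      exact_mod_cast congrArg (Nat.cast : ℕ → ℝ) h1
    have h2' : ((V 0).card : ℝ) ≤ (((V 0) ∪ (Bad1 ∪ Bad2)).card : ℝ) := by exact_mod_cast h2
    have h3' : ((Bad1 ∪ Bad2).card : ℝ) ≤ (Bad1.card : ℝ) + (Bad2.card : ℝ) := by exact_mod_cast h3
    have hc0 : ((V 0).card : ℝ) = s := by exact_mod_cast congrArg (Nat.cast : ℕ → ℝ) (hcard 0)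
    rw [hc0] at h01 h02 h2'
    linarith
  obtain ⟨u, hu, u', hu', huu'⟩ := hind 0 W₁ hW₁sub (by nlinarith)
  have hmemW : ∀ x ∈ W₁, x ∈ V 0 ∧
      (1 / 2 + μ) * s ≤ (((V 1).filter (Rg.Adj x)).card : ℝ) ∧
      (1 / 2 + μ) * s ≤ (((V 2).filter (Rg.Adj x)).card : ℝ) := by
    intro x hx
    rw [hW₁, Finset.mem_sdiff, Finset.mem_union] at hx
    obtain ⟨hxV, hxB⟩ := hx
    push_neg at hxB
    obtain ⟨hxB1, hxB2⟩ := hxB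
    rw [hBad1, Finset.mem_filter] at hxB1
    rw [hBad2, Finset.mem_filter] at hxB2
    push_neg at hxB1 hxB2
    have e1 : ((V 1).card : ℝ) = s := by exact_mod_cast congrArg (Nat.cast : ℕ → ℝ) (hcard 1)
    have e2 : ((V 2).card : ℝ) = s := by exact_mod_cast congrArg (Nat.cast : ℕ → ℝ) (hcard 2)
    refine ⟨hxV, ?_, ?_⟩
    · have := hxB1 hxV; rw [e1] at this; linarith
    · have := hxB2 hxV; rw [e2] at this; linarith
  obtain ⟨huV, hu1, hu2⟩ := hmemW u hu
  obtain ⟨hu'V, hu'1, hu'2⟩ := hmemW u' hu'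
  set A₂ := (V 1).filter (fun y => Rg.Adj u y ∧ Rg.Adj u' y) with hA₂
  set A₃ := (V 2).filter (fun y => Rg.Adj u y ∧ Rg.Adj u' y) with hA₃
  have e1 : ((V 1).card : ℝ) = s := by exact_mod_cast congrArg (Nat.cast : ℕ → ℝ) (hcard 1)
  have e2 : ((V 2).card : ℝ) = s := by exact_mod_cast congrArg (Nat.cast : ℕ → ℝ) (hcard 2)
  have hA₂card : 2 * μ * s ≤ (A₂.card : ℝ) := by
    have := common_nbhd Rg u u' (V 1)
    rw [e1] at this; linarith
  have hA₃card : 2 * μ * s ≤ (A₃.card : ℝ) := by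
    have := common_nbhd Rg u u' (V 2)
    rw [e2] at this; linarith
  -- Stage 2
  have hA₃sub : A₃ ⊆ V 2 := Finset.filter_subset _ _
  have hA₃pos : 0 < (A₃.card : ℝ) := by nlinarith
  have h12 := badset hμ0 Rg A₃ (hreg 1 2 (by decide)) hA₃sub
      (by rw [e2]; nlinarith) hA₃pos (hyp 1) (hden 1 2 (by decide))
  set Bad' := (V 1).filter fun x =>
    ((A₃.filter (Rg.Adj x)).card : ℝ) < (1 / 2 + 2 * μ - μ) * (A₃.card : ℝ) with hBad'
  set W₂ := A₂ \ Bad' with hW₂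
  have hW₂sub : W₂ ⊆ A₂ := Finset.sdiff_subset
  have hW₂card : μ * s < (W₂.card : ℝ) := by
    have h1 : W₂.card + Bad'.card = (A₂ ∪ Bad').card := Finset.card_sdiff_add_card _ _
    have h2 : A₂.card ≤ (A₂ ∪ Bad').card := Finset.card_le_card Finset.subset_union_left
    have h1' : (W₂.card : ℝ) + (Bad'.card : ℝ) = ((A₂ ∪ Bad').card : ℝ) := by
      exact_mod_cast congrArg (Nat.cast : ℕ → ℝ) h1
    have h2' : (A₂.card : ℝ) ≤ ((A₂ ∪ Bad').card : ℝ) := by exact_mod_cast h2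
    rw [e1] at h12
    linarith
  have hA₂V : A₂ ⊆ V 1 := Finset.filter_subset _ _
  obtain ⟨v, hv, v', hv', hvv'⟩ := hind 1 W₂ (hW₂sub.trans hA₂V) (by nlinarith)
  have hmemW₂ : ∀ x ∈ W₂, (x ∈ V 1 ∧ Rg.Adj u x ∧ Rg.Adj u' x) ∧
      (1 / 2 + μ) * (A₃.card : ℝ) ≤ ((A₃.filter (Rg.Adj x)).card : ℝ) := by
    intro x hx
    rw [hW₂, Finset.mem_sdiff] at hx
    obtain ⟨hxA, hxB⟩ := hx
    rw [hA₂, Finset.mem_filter] at hxA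
    rw [hBad', Finset.mem_filter] at hxB
    push_neg at hxB
    refine ⟨⟨hxA.1, hxA.2⟩, ?_⟩
    have := hxB hxA.1
    linarith
  obtain ⟨⟨hvV, huv, hu'v⟩, hv3⟩ := hmemW₂ v hv
  obtain ⟨⟨hv'V, huv', hu'v'⟩, hv'3⟩ := hmemW₂ v' hv'
  set A₃' := A₃.filter (fun y => Rg.Adj v y ∧ Rg.Adj v' y) with hA₃'
  have hA₃'card : 4 * μ ^ 2 * s ≤ (A₃'.card : ℝ) := by
    have := common_nbhd Rg v v' A₃
    nlinarith
  obtain ⟨w, hw, w', hw', hww'⟩ := hind 2 A₃' ((Finset.filter_subset _ _).trans hA₃sub) hA₃'card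
  have hmemA₃' : ∀ x ∈ A₃', (x ∈ V 2 ∧ Rg.Adj u x ∧ Rg.Adj u' x) ∧
      Rg.Adj v x ∧ Rg.Adj v' x := by
    intro x hx
    rw [hA₃', Finset.mem_filter] at hx
    obtain ⟨hxA, hxv⟩ := hx
    rw [hA₃, Finset.mem_filter] at hxA
    exact ⟨⟨hxA.1, hxA.2⟩, hxv⟩
  obtain ⟨⟨hwV, huw, hu'w⟩, hvw, hv'w⟩ := hmemA₃' w hw
  obtain ⟨⟨hw'V, huw', hu'w'⟩, hvw', hv'w'⟩ := hmemA₃' w' hw'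
  -- Build the embedding
  have hadj : ∀ a b : Fin 3 × Fin 2, a ≠ b →
      Rg.Adj ((![![u, u'], ![v, v'], ![w, w']]) a.1 a.2)
        ((![![u, u'], ![v, v'], ![w, w']]) b.1 b.2) := by
    rintro ⟨i, k⟩ ⟨j, l⟩ hab
    fin_cases i <;> fin_cases k <;> fin_cases j <;> fin_cases l <;>
      first
      | exact absurd rfl hab
      | exact huu' | exact huu'.symm | exact hvv' | exact hvv'.symm
      | exact hww' | exact hww'.symm
      | exact huv | exact huv.symm | exact hu'v | exact hu'v.symm
      | exact huv' | exact huv'.symm | exact hu'v' | exact hu'v'.symm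
      | exact huw | exact huw.symm | exact hu'w | exact hu'w.symm
      | exact huw' | exact huw'.symm | exact hu'w' | exact hu'w'.symm
      | exact hvw | exact hvw.symm | exact hv'w | exact hv'w.symm
      | exact hvw' | exact hvw'.symm | exact hv'w' | exact hv'w'.symm
  refine ⟨fun p => (![![u, u'], ![v, v'], ![w, w']]) p.1 p.2, ?_, ?_, hadj⟩
  · intro a b hfab
    by_contra hne
    exact (hadj a b hne).ne hfab
  · intro i k
    fin_cases i <;> fin_cases k
    exacts [huV, hu'V, hvV, hv'V, hwV, hw'V]
end
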